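/- arXiv:math/0205240 — 5 statements merged into one kernel-verified Lean document; each statement's English description precedes it below -/
import Mathlib

section
/- Let k ≤ n and let ω, ω′ be two effective k-forms on V such that for every k-dimensional isotropic subspace L of (V, Ω), the restriction of ω to L vanishes if and only if the restriction of ω′ to L vanishes. Then ω and ω′ are linearly dependent (one is a scalar multiple of the other). -/
open scoped TensorProduct

/-- The wedge product of alternating forms with values in a commutative algebra `A`
(determinant/shuffle convention, via `AlternatingMap.domCoprod`). -/
noncomputable def wedge {V : Type*} [AddCommGroup V] [Module ℝ V]
    {A : Type*} [CommRing A] [Algebra ℝ A] {k l : ℕ}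
    (α : AlternatingMap ℝ V A (Fin k)) (β : AlternatingMap ℝ V A (Fin l)) :
    AlternatingMap ℝ V A (Fin (k + l)) :=
  (LinearMap.mul' ℝ A).compAlternatingMap ((α.domCoprod β).domDomCongr finSumFinEquiv)

/-- A covector regarded as an alternating `1`-form. -/
noncomputable def oneForm {V : Type*} [AddCommGroup V] [Module ℝ V]
    {A : Type*} [CommRing A] [Algebra ℝ A] (ξ : V →ₗ[ℝ] A) :
    AlternatingMap ℝ V A (Fin 1) :=
  AlternatingMap.ofSubsingleton ℝ V A (0 : Fin 1) ξ

/-- Contraction `⊥` of a form with the bivector `Σⱼ eⱼ ∧ fⱼ` associated with a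
symplectic basis `(e, f)`:  `⊥α = Σⱼ ι_{fⱼ} ι_{eⱼ} α`. -/
noncomputable def sympContract {V : Type*} [AddCommGroup V] [Module ℝ V] {n : ℕ}
    (e f : Fin n → V) {m : ℕ} (α : AlternatingMap ℝ V ℝ (Fin (m + 2))) :
    AlternatingMap ℝ V ℝ (Fin m) :=
  ∑ j : Fin n, ((α.curryLeft (e j)).curryLeft (f j))

/-- A form is effective if its contraction with the bivector of the symplectic
structure vanishes (vacuously true in degrees `< 2`). -/
def IsEffective {V : Type*} [AddCommGroup V] [Module ℝ V] {n : ℕ}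
    (e f : Fin n → V) {m : ℕ} (α : AlternatingMap ℝ V ℝ (Fin m)) : Prop :=
  ∀ (m' : ℕ) (h : m = m' + 2), sympContract e f (α.domDomCongr (finCongr h)) = 0

/-!
Write `B` for the bilinear form of `Ω`. An alternating `k`-form vanishes on the span of an
independent `k`-tuple as soon as it vanishes at the tuple, so `ω` and `ω'` have the same zeros
on isotropic `k`-tuples. Along the orbit `t ↦ τ_{a,t} ∘ u` of a symplectic transvection
`τ_{a,t} x = x + t B(x, a) a` both forms are affine in `t`, and two affine functions with the
same zeros, the first nonzero at `t = 0`, are proportional. Symplectic transvections act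
transitively on independent isotropic `k`-tuples (a form of Witt's theorem); following such a
chain of transvections, and moving each intermediate tuple along its orbit to avoid the common
zeros, shows `ω' = c • ω` on all isotropic tuples.

It remains to see that an effective form `θ` vanishing on isotropic tuples is zero. Evaluate it
on tuples from the symplectic basis `(e, f)` and induct on the number of pairs `e l, f l` in the
tuple. For indices `l, l'` not used by the rest `w` of a tuple, the transvection along
`f l + f l'` yields a new symplectic basis for which `θ` is still effective, and comparing
`θ (e l + f l + f l', e l' + f l + f l', w)` in both bases gives
`θ (e l, f l, w) = θ (e l', f l', w)`; effectivity `∑ j, θ (e j, f j, w) = 0` then forces these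
common values to vanish.
-/

open Module

namespace AlternatingMap

variable {R V : Type*} [CommRing R] [AddCommGroup V] [Module R V]

def toBilinForm {m : ℕ} (ω : V [⋀^Fin (m + 2)]→ₗ[R] R) (w : Fin m → V) :
    LinearMap.BilinForm R V :=
  LinearMap.mk₂ R (fun x y => ω (Matrix.vecCons x (Matrix.vecCons y w)))
    (fun x x' _ => ω.map_vecCons_add _ x x')
    (fun c x _ => ω.map_vecCons_smul _ c x)
    (fun x y y' => (ω.curryLeft x).map_vecCons_add w y y')
    (fun c x y => (ω.curryLeft x).map_vecCons_smul w c y)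

theorem toBilinForm_apply {m : ℕ} (ω : V [⋀^Fin (m + 2)]→ₗ[R] R) (w : Fin m → V)
    (x y : V) : ω.toBilinForm w x y = ω (Fin.cons x (Fin.cons y w)) := rfl

theorem toBilinForm_isAlt {m : ℕ} (ω : V [⋀^Fin (m + 2)]→ₗ[R] R) (w : Fin m → V) :
    (ω.toBilinForm w).IsAlt := fun _ =>
  ω.map_eq_zero_of_eq (i := 0) (j := 1) _ rfl zero_ne_one

variable {N : Type*} [AddCommGroup N] [Module R N] in
theorem map_add_smul {k : ℕ} (ω : V [⋀^Fin k]→ₗ[R] N) (u : Fin k → V) (c : Fin k → R)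
    (a : V) : ω (fun i => u i + c i • a) = ω u + ∑ i, c i • ω (Function.update u i a) := by
  induction k with
  | zero => simp [Subsingleton.elim (fun i => u i + c i • a) u]
  | succ k ih =>
    have expand : ∀ v : Fin (k + 1) → V, ω v = ω.curryLeft (v 0) (Fin.tail v) := fun v => by
      rw [curryLeft_apply_apply, ← Fin.cons_self_tail v]; rfl
    have hrep : ∀ i, ω.curryLeft a (Function.update (Fin.tail u) i a) = 0 := fun i => by
      rw [curryLeft_apply_apply]
      exact ω.map_eq_zero_of_eq _ (i := 0) (j := i.succ) (by simp) (Fin.succ_ne_zero i).symm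
    have hsucc : ∀ i, ω (Function.update u i.succ a) =
        ω.curryLeft (u 0) (Function.update (Fin.tail u) i a) := fun i => by
      rw [expand, Fin.tail_update_succ, Function.update_of_ne (Fin.succ_ne_zero i).symm]
    have htail : Fin.tail (fun i => u i + c i • a) = fun i => Fin.tail u i + Fin.tail c i • a :=
      rfl
    rw [expand, expand u, Fin.sum_univ_succ, expand (Function.update u 0 a), Function.update_self,
      Fin.tail_update_zero, htail, map_add, map_smul, add_apply, smul_apply, ih, ih]
    simp only [hsucc, hrep, smul_zero, Finset.sum_const_zero, add_zero, Fin.tail]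
    abel

theorem map_eq_zero_of_mem_span {k : ℕ} (ω : V [⋀^Fin k]→ₗ[R] R) {v : Fin k → V}
    (hv : LinearIndependent R v) (h : ω v = 0) {w : Fin k → V}
    (hw : ∀ i, w i ∈ Submodule.span R (Set.range v)) : ω w = 0 := by
  set L := Submodule.span R (Set.range v)
  have hL : ω.compLinearMap L.subtype = 0 := by
    rw [(ω.compLinearMap L.subtype).eq_smul_basis_det (Basis.span hv)]
    simp [AlternatingMap.compLinearMap_apply, h]
  exact congrArg (fun φ : L [⋀^Fin k]→ₗ[R] R => φ fun i => ⟨w i, hw i⟩) hL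

theorem toBilinForm_apply_eq_zero_of_mem_range {m : ℕ} (ω : V [⋀^Fin (m + 2)]→ₗ[R] R)
    {w : Fin m → V} {x y : V} (h : x ∈ Set.range w ∨ y ∈ Set.range w) :
    ω.toBilinForm w x y = 0 := by
  rcases h with ⟨i, rfl⟩ | ⟨i, rfl⟩
  · exact ω.map_eq_zero_of_eq _ (i := 0) (j := i.succ.succ) (by simp) (by simp [Fin.ext_iff])
  · exact ω.map_eq_zero_of_eq _ (i := 1) (j := i.succ.succ) (by simp) (by simp [Fin.ext_iff])

end AlternatingMap

section AffineZeros

variable {K : Type*} [Field K]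

theorem eq_mul_of_forall_add_mul_eq_zero_iff {α β δ c : K} (hα : α ≠ 0)
    (h : ∀ t, α + t * β = 0 ↔ c * α + t * δ = 0) : δ = c * β := by
  rcases eq_or_ne β 0 with rfl | hβ
  · by_contra hδ
    rw [mul_zero] at hδ
    have := (h (-(c * α) / δ)).mpr (by field_simp; ring)
    simp [hα] at this
  · have := (h (-α / β)).mp (by field_simp; ring)
    field_simp at this
    apply mul_left_cancel₀ hα
    linear_combination -this

theorem exists_add_mul_ne_zero [Infinite K] {α β α' β' : K} (hα : α ≠ 0) (hα' : α' ≠ 0)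
    (t₀ : K) : ∃ s, α + s * β ≠ 0 ∧ α' + (s - t₀) * β' ≠ 0 := by
  classical
  have root : ∀ {x y s : K}, x ≠ 0 → x + s * y = 0 → s = -x / y := fun {x y s} hx h => by
    have hy : y ≠ 0 := by rintro rfl; simp [hx] at h
    field_simp
    linear_combination h
  obtain ⟨s, hs⟩ := Infinite.exists_notMem_finset ({-α / β, t₀ + -α' / β'} : Finset K)
  refine ⟨s, fun h => hs ?_, fun h => hs ?_⟩
  · simp [root hα h]
  · simp [← root hα' h]

end AffineZeros

namespace LinearMap.BilinForm

variable {K V : Type*} [Field K] [AddCommGroup V] [Module K V] (B : LinearMap.BilinForm K V)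

def IsIsotropic {ι : Type*} (v : ι → V) : Prop := ∀ i j, B (v i) (v j) = 0

def symplecticTransvection (a : V) (t : K) : Module.End K V :=
  LinearMap.transvection (t • B.flip a) a

def symplecticTransvections : Set (Module.End K V) :=
  Set.range fun (p : V × K) => B.symplecticTransvection p.1 p.2

variable {B}

theorem symplecticTransvection_apply (a : V) (t : K) (x : V) :
    B.symplecticTransvection a t x = x + (t * B x a) • a := rfl

theorem symplecticTransvection_zero (a x : V) : B.symplecticTransvection a 0 x = x := by
  simp [symplecticTransvection_apply]

theorem symplecticTransvection_apply_of_apply_eq_zero {a x : V} (t : K) (h : B x a = 0) :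
    B.symplecticTransvection a t x = x := by
  simp [symplecticTransvection_apply, h]

theorem symplecticTransvection_apply_of_apply_ne_zero (hB : B.IsAlt) {x y : V} (h : B x y ≠ 0) :
    B.symplecticTransvection (y - x) (B x y)⁻¹ x = y := by
  rw [symplecticTransvection_apply, map_sub, hB.self_eq_zero, sub_zero, inv_mul_cancel₀ h,
    one_smul, add_sub_cancel]

theorem symplecticTransvection_apply_apply (hB : B.IsAlt) (a : V) (s t : K) (x : V) :
    B.symplecticTransvection a s (B.symplecticTransvection a t x) =
      B.symplecticTransvection a (s + t) x := by
  rw [symplecticTransvection, symplecticTransvection, transvection.comp_of_right_eq_apply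
    (by simp [hB.self_eq_zero]), symplecticTransvection, add_smul]

theorem isOrthogonal_symplecticTransvection (hB : B.IsAlt) (a : V) (t : K) :
    B.IsOrthogonal (B.symplecticTransvection a t) := fun x y => by
  simp only [symplecticTransvection_apply, map_add, map_smul, LinearMap.add_apply,
    LinearMap.smul_apply, hB.self_eq_zero, smul_eq_mul, ← LinearMap.IsAlt.neg hB y a]
  ring

theorem _root_.LinearMap.IsOrthogonal.apply_symplecticTransvection {g : Module.End K V}
    (hg : B.IsOrthogonal g) (a : V) (t : K) (x : V) :
    g (B.symplecticTransvection a t x) = B.symplecticTransvection (g a) t (g x) := by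
  simp [symplecticTransvection_apply, hg x a]

theorem isOrthogonal_of_mem_closure (hB : B.IsAlt) {g : Module.End K V}
    (hg : g ∈ Submonoid.closure B.symplecticTransvections) : B.IsOrthogonal g := by
  induction hg using Submonoid.closure_induction with
  | mem g hg =>
    obtain ⟨⟨a, t⟩, rfl⟩ := hg
    exact isOrthogonal_symplecticTransvection hB a t
  | one => exact fun x y => rfl
  | mul g h _ _ hg hh => exact fun x y => (hg (h x) (h y)).trans (hh x y)

theorem _root_.LinearMap.IsOrthogonal.injective (hB : B.SeparatingLeft) {g : Module.End K V}
    (hg : B.IsOrthogonal g) : Function.Injective g := by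
  rw [← LinearMap.ker_eq_bot, LinearMap.ker_eq_bot']
  intro x hx
  exact hB x fun y => by rw [← hg, hx, LinearMap.map_zero₂]

theorem IsIsotropic.comp {ι : Type*} {v : ι → V} (hv : B.IsIsotropic v) {g : Module.End K V}
    (hg : B.IsOrthogonal g) : B.IsIsotropic (g ∘ v) := fun i j => (hg _ _).trans (hv i j)

theorem IsIsotropic.apply_eq_zero_of_mem_span {ι : Type*} {v : ι → V} (hv : B.IsIsotropic v)
    {x y : V} (hx : x ∈ Submodule.span K (Set.range v))
    (hy : y ∈ Submodule.span K (Set.range v)) : B x y = 0 := by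
  have hvy : ∀ i, B (v i) y = 0 := fun i =>
    (Submodule.span_le (p := LinearMap.ker (B (v i))) |>.mpr (Set.range_subset_iff.mpr (hv i))) hy
  exact (Submodule.span_le (p := LinearMap.ker (B.flip y)) |>.mpr
    (Set.range_subset_iff.mpr hvy)) hx

theorem apply_eq_zero_iff_of_forall_submodule {k : ℕ} {ω ω' : V [⋀^Fin k]→ₗ[K] K}
    (hsame : ∀ L : Submodule K V, Module.finrank K L = k →
      (∀ X ∈ L, ∀ Y ∈ L, B X Y = 0) →
      ((∀ v : Fin k → V, (∀ i, v i ∈ L) → ω v = 0) ↔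
        (∀ v : Fin k → V, (∀ i, v i ∈ L) → ω' v = 0)))
    {v : Fin k → V} (hv : B.IsIsotropic v) : ω v = 0 ↔ ω' v = 0 := by
  by_cases hli : LinearIndependent K v
  · have hspan := hsame _ (by rw [finrank_span_eq_card hli, Fintype.card_fin])
      fun X hX Y hY => hv.apply_eq_zero_of_mem_span hX hY
    have hmem : ∀ i, v i ∈ Submodule.span K (Set.range v) := fun i =>
      Submodule.subset_span ⟨i, rfl⟩
    exact ⟨fun h => hspan.mp (fun _ => ω.map_eq_zero_of_mem_span hli h) v hmem,
      fun h => hspan.mpr (fun _ => ω'.map_eq_zero_of_mem_span hli h) v hmem⟩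
  · simp [ω.map_linearDependent v hli, ω'.map_linearDependent v hli]

theorem exists_forall_apply_eq [FiniteDimensional K V] (hnd : B.Nondegenerate) {ι : Type*}
    {v : ι → V} (hv : LinearIndependent K v) (c : ι → K) :
    ∃ ζ, ∀ i, B (v i) ζ = c i := by
  obtain ⟨φ, hφ⟩ := LinearMap.exists_extend ((Basis.span hv).constr K c)
  refine ⟨(B.flip.toDual hnd.flip).symm φ, fun i => ?_⟩
  calc B (v i) ((B.flip.toDual hnd.flip).symm φ) = φ (v i) :=
      apply_toDual_symm_apply (B := B.flip) φ (v i)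
    _ = c i := by
      rw [← Basis.coe_span_apply hv i, ← Submodule.subtype_apply, ← LinearMap.comp_apply, hφ,
        Basis.constr_basis]

theorem exists_orthogonal_apply_ne_zero [FiniteDimensional K V] (hnd : B.Nondegenerate)
    {r : ℕ} {z : Fin r → V} {x y : V}
    (hx : LinearIndependent K (Fin.snoc z x : Fin (r + 1) → V))
    (hy : LinearIndependent K (Fin.snoc z y : Fin (r + 1) → V)) :
    ∃ ζ, (∀ i, B (z i) ζ = 0) ∧ B x ζ ≠ 0 ∧ B y ζ ≠ 0 := by
  obtain ⟨ζx, hζx⟩ := exists_forall_apply_eq hnd hx (Fin.snoc 0 1)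
  obtain ⟨ζy, hζy⟩ := exists_forall_apply_eq hnd hy (Fin.snoc 0 1)
  have hzx : ∀ i, B (z i) ζx = 0 := fun i => by simpa using hζx i.castSucc
  have hzy : ∀ i, B (z i) ζy = 0 := fun i => by simpa using hζy i.castSucc
  have hxx : B x ζx = 1 := by simpa using hζx (Fin.last r)
  have hyy : B y ζy = 1 := by simpa using hζy (Fin.last r)
  by_cases hyx : B y ζx = 0
  · by_cases hxy : B x ζy = 0
    · exact ⟨ζx + ζy, fun i => by simp [hzx, hzy], by simp [hxx, hxy], by simp [hyx, hyy]⟩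
    · exact ⟨ζy, hzy, hxy, by simp [hyy]⟩
  · exact ⟨ζx, hzx, by simp [hxx], hyx⟩

theorem exists_mem_closure_fix_apply_eq [FiniteDimensional K V] (hB : B.IsAlt)
    (hnd : B.Nondegenerate) {r : ℕ} {z : Fin r → V} {x y : V} (hzx : ∀ i, B (z i) x = 0)
    (hzy : ∀ i, B (z i) y = 0) (hx : LinearIndependent K (Fin.snoc z x : Fin (r + 1) → V))
    (hy : LinearIndependent K (Fin.snoc z y : Fin (r + 1) → V)) :
    ∃ g ∈ Submonoid.closure B.symplecticTransvections, (∀ i, g (z i) = z i) ∧ g x = y := by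
  obtain ⟨ζ, hzζ, hxζ, hyζ⟩ := exists_orthogonal_apply_ne_zero hnd hx hy
  have hζy : B ζ y ≠ 0 := by rwa [← LinearMap.IsAlt.neg hB, neg_ne_zero]
  refine ⟨B.symplecticTransvection (y - ζ) (B ζ y)⁻¹ *
      B.symplecticTransvection (ζ - x) (B x ζ)⁻¹,
    Submonoid.mul_mem _ (Submonoid.subset_closure ⟨(_, _), rfl⟩)
      (Submonoid.subset_closure ⟨(_, _), rfl⟩), fun i => ?_, ?_⟩
  · rw [Module.End.mul_apply,
      symplecticTransvection_apply_of_apply_eq_zero (x := z i) _ (by simp [hzζ, hzx]),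
      symplecticTransvection_apply_of_apply_eq_zero _ (by simp [hzζ, hzy])]
  · rw [Module.End.mul_apply, symplecticTransvection_apply_of_apply_ne_zero hB hxζ,
      symplecticTransvection_apply_of_apply_ne_zero hB hζy]

theorem exists_mem_closure_comp_eq [FiniteDimensional K V] (hB : B.IsAlt)
    (hnd : B.Nondegenerate) {k : ℕ} {u w : Fin k → V} (hu : B.IsIsotropic u)
    (hw : B.IsIsotropic w) (hu' : LinearIndependent K u) (hw' : LinearIndependent K w) :
    ∃ g ∈ Submonoid.closure B.symplecticTransvections, g ∘ u = w := by
  induction k with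
  | zero => exact ⟨1, Submonoid.one_mem _, funext finZeroElim⟩
  | succ k ih =>
    obtain ⟨g, hg, hgu⟩ := ih (u := Fin.init u) (w := Fin.init w) (fun i j => hu _ _)
      (fun i j => hw _ _) (hu'.comp _ (Fin.castSucc_injective k))
      (hw'.comp _ (Fin.castSucc_injective k))
    have hinit : ∀ i, Fin.init w i = g (u i.castSucc) := fun i => (congrFun hgu i).symm
    have hgu' : (Fin.snoc (Fin.init w) (g (u (Fin.last k))) : Fin (k + 1) → V) = g ∘ u := by
      rw [← Fin.snoc_init_self (g ∘ u)]
      congr 1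
      exact funext fun i => hinit i
    have hgB := isOrthogonal_of_mem_closure hB hg
    obtain ⟨h, hh, hfix, hmove⟩ := exists_mem_closure_fix_apply_eq hB hnd (z := Fin.init w)
      (x := g (u (Fin.last k))) (y := w (Fin.last k))
      (fun i => by rw [hinit, hgB]; exact hu _ _)
      (fun i => hw _ _)
      (by rw [hgu']; exact hu'.map' g (LinearMap.ker_eq_bot.mpr (hgB.injective hnd.1)))
      (by rw [Fin.snoc_init_self]; exact hw')
    refine ⟨h * g, Submonoid.mul_mem _ hh hg, funext fun i => ?_⟩
    refine Fin.lastCases ?_ (fun i => ?_) i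
    · exact hmove
    · rw [Function.comp_apply, Module.End.mul_apply, ← hinit, hfix]; rfl

theorem map_comp_symplecticTransvection {k : ℕ} (ω : V [⋀^Fin k]→ₗ[K] K) (u : Fin k → V)
    (a : V) (t : K) :
    ω (B.symplecticTransvection a t ∘ u) =
      ω u + t * ∑ i, B (u i) a * ω (Function.update u i a) := by
  rw [show ⇑(B.symplecticTransvection a t) ∘ u = fun i => u i + (t * B (u i) a) • a from rfl,
    ω.map_add_smul, Finset.mul_sum]
  simp only [smul_eq_mul, mul_assoc]

section Proportionality

variable {k : ℕ} {ω ω' : V [⋀^Fin k]→ₗ[K] K}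

theorem map_symplecticTransvection_comp_eq_mul (hB : B.IsAlt)
    (hiff : ∀ v, B.IsIsotropic v → (ω v = 0 ↔ ω' v = 0)) {u : Fin k → V}
    (hu : B.IsIsotropic u) (hωu : ω u ≠ 0) {c : K} (hc : ω' u = c * ω u) (a : V) (t : K) :
    ω' (B.symplecticTransvection a t ∘ u) = c * ω (B.symplecticTransvection a t ∘ u) := by
  have hzero : ∀ s, ω (B.symplecticTransvection a s ∘ u) = 0 ↔
      ω' (B.symplecticTransvection a s ∘ u) = 0 := fun s =>
    hiff _ (hu.comp (isOrthogonal_symplecticTransvection hB a s))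
  simp only [map_comp_symplecticTransvection, hc] at hzero ⊢
  rw [eq_mul_of_forall_add_mul_eq_zero_iff hωu hzero]
  ring

theorem map_comp_eq_mul_of_mem_closure [Infinite K] (hB : B.IsAlt)
    (hiff : ∀ v, B.IsIsotropic v → (ω v = 0 ↔ ω' v = 0)) {c : K} {g : Module.End K V}
    (hg : g ∈ Submonoid.closure B.symplecticTransvections) {u : Fin k → V}
    (hu : B.IsIsotropic u) (hωu : ω u ≠ 0) (hc : ω' u = c * ω u) :
    ω' (g ∘ u) = c * ω (g ∘ u) := by
  induction hg using Submonoid.closure_induction_right generalizing u with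
  | one => exact hc
  | mul_right G hG _ hτ ih =>
    obtain ⟨⟨a, t₀⟩, rfl⟩ := hτ
    have hGB := isOrthogonal_of_mem_closure hB hG
    set w := G ∘ (B.symplecticTransvection a t₀ ∘ u) with hw_def
    have hw : B.IsIsotropic w :=
      (hu.comp (isOrthogonal_symplecticTransvection hB a t₀)).comp hGB
    change ω' w = c * ω w
    by_cases hωw : ω w = 0
    · rw [hωw, (hiff w hw).mp hωw, mul_zero]
    -- `w` may be reached through a common zero `τ_{a,t₀} ∘ u`; move `u` along its orbit to a
    -- point `τ_{a,s} ∘ u` off the zeros whose image `τ_{G a, s - t₀} ∘ w` is also off them.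
    obtain ⟨s, hs, hs'⟩ := exists_add_mul_ne_zero hωu hωw t₀
      (β := ∑ i, B (u i) a * ω (Function.update u i a))
      (β' := ∑ i, B (w i) (G a) * ω (Function.update w i (G a)))
    rw [← map_comp_symplecticTransvection] at hs hs'
    have hconj : G ∘ (B.symplecticTransvection a s ∘ u) =
        B.symplecticTransvection (G a) (s - t₀) ∘ w := funext fun i => by
      simp only [hw_def, Function.comp_apply, ← hGB.apply_symplecticTransvection,
        symplecticTransvection_apply_apply hB, sub_add_cancel]
    have h₁ := ih (hu.comp (isOrthogonal_symplecticTransvection hB a s)) hs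
      (map_symplecticTransvection_comp_eq_mul hB hiff hu hωu hc a s)
    rw [hconj] at h₁
    have h₂ := map_symplecticTransvection_comp_eq_mul hB hiff
      (hw.comp (isOrthogonal_symplecticTransvection hB _ _)) hs' h₁ (G a) (t₀ - s)
    have hback : B.symplecticTransvection (G a) (t₀ - s) ∘
        (B.symplecticTransvection (G a) (s - t₀) ∘ w) = w := funext fun i => by
      rw [Function.comp_apply, Function.comp_apply, symplecticTransvection_apply_apply hB,
        sub_add_sub_cancel, sub_self, symplecticTransvection_zero]
    rwa [hback] at h₂

theorem exists_forall_isIsotropic_eq_mul [FiniteDimensional K V] [Infinite K] (hB : B.IsAlt)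
    (hnd : B.Nondegenerate) (hiff : ∀ v, B.IsIsotropic v → (ω v = 0 ↔ ω' v = 0)) :
    ∃ c : K, ∀ v, B.IsIsotropic v → ω' v = c * ω v := by
  by_cases h : ∀ u, B.IsIsotropic u → ω u = 0
  · exact ⟨0, fun v hv => by rw [zero_mul]; exact (hiff v hv).mp (h v hv)⟩
  obtain ⟨u, hu, hωu⟩ : ∃ u, B.IsIsotropic u ∧ ω u ≠ 0 := by simpa using h
  refine ⟨ω' u / ω u, fun v hv => ?_⟩
  by_cases hv' : LinearIndependent K v
  · have hu' : LinearIndependent K u := by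
      by_contra hdep
      exact hωu (ω.map_linearDependent u hdep)
    obtain ⟨g, hg, rfl⟩ := exists_mem_closure_comp_eq hB hnd hu hv hu' hv'
    exact map_comp_eq_mul_of_mem_closure hB hiff hg hu hωu (by field_simp)
  · rw [ω.map_linearDependent v hv', ω'.map_linearDependent v hv', mul_zero]

end Proportionality

theorem separatingLeft_of_apply_eq_ite {ι : Type*} [DecidableEq ι] (b : Basis ι K V)
    (c : ι → V) (h : ∀ s t, B (b s) (c t) = if s = t then 1 else 0) : B.SeparatingLeft := by
  have hcoord : ∀ t, b.coord t = B.flip (c t) := fun t =>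
    b.ext fun s => by simp [h, Finsupp.single_apply]
  intro x hx
  refine b.ext_elem fun t => ?_
  rw [← b.coord_apply, hcoord, map_zero, Finsupp.zero_apply]
  exact hx (c t)

variable {n : ℕ}

structure IsSymplecticFamily (B : LinearMap.BilinForm K V) (e f : Fin n → V) : Prop where
  apply_e_e : ∀ i j, B (e i) (e j) = 0
  apply_f_f : ∀ i j, B (f i) (f j) = 0
  apply_e_f : ∀ i j, B (e i) (f j) = if i = j then 1 else 0

namespace IsSymplecticFamily

variable {e f : Fin n → V}

theorem nondegenerate (hB : B.IsAlt) (b : Basis (Fin n ⊕ Fin n) K V)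
    (h : IsSymplecticFamily B (fun i => b (.inl i)) (fun i => b (.inr i))) : B.Nondegenerate := by
  refine hB.isRefl.nondegenerate_iff_separatingLeft.mpr
    (separatingLeft_of_apply_eq_ite b (Sum.elim (fun i => b (.inr i)) (fun i => -b (.inl i))) ?_)
  rintro (i | i) (j | j)
  · simpa using h.apply_e_f i j
  · simpa using h.apply_e_e i j
  · simpa using h.apply_f_f i j
  · simpa [LinearMap.IsAlt.neg hB, eq_comm] using h.apply_e_f j i

theorem apply_eq_zero_of_mem_span (h : IsSymplecticFamily B e f) (i : Fin n) {a : V}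
    (ha : a ∈ Submodule.span K (Set.range f)) : B (f i) a = 0 :=
  (Submodule.span_le (p := LinearMap.ker (B (f i))) |>.mpr
    (Set.range_subset_iff.mpr fun j => h.apply_f_f i j)) ha

theorem sum_apply_smul_eq (h : IsSymplecticFamily B e f) {a : V}
    (ha : a ∈ Submodule.span K (Set.range f)) : ∑ j, B (e j) a • f j = a := by
  induction ha using Submodule.span_induction with
  | mem x hx =>
    obtain ⟨i, rfl⟩ := hx
    simp [h.apply_e_f]
  | zero => simp
  | add x y _ _ hx hy => simp [add_smul, Finset.sum_add_distrib, hx, hy]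
  | smul c x _ hx => simp [mul_smul, ← Finset.smul_sum, hx]

theorem symplecticTransvection_comp (hB : B.IsAlt) (h : IsSymplecticFamily B e f) {a : V}
    (ha : a ∈ Submodule.span K (Set.range f)) (t : K) :
    IsSymplecticFamily B (B.symplecticTransvection a t ∘ e) f := by
  have hτ := isOrthogonal_symplecticTransvection hB a t
  have hf : ∀ j, B.symplecticTransvection a t (f j) = f j := fun j =>
    symplecticTransvection_apply_of_apply_eq_zero t (h.apply_eq_zero_of_mem_span j ha)
  refine ⟨fun i j => ?_, h.apply_f_f, fun i j => ?_⟩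
  · rw [Function.comp_apply, Function.comp_apply, hτ, h.apply_e_e]
  · rw [Function.comp_apply, ← hf j, hτ, h.apply_e_f]

end IsSymplecticFamily

end LinearMap.BilinForm

section Selections

/-! A map `s : Fin r → Fin n ⊕ Fin n` selects the tuple `Sum.elim e f ∘ s` from a family
`(e, f)`: `inl m` stands for `e m` and `inr m` for `f m`. -/

open Finset

variable {n r : ℕ}

def pairedIndices (s : Fin r → Fin n ⊕ Fin n) : Finset (Fin n) :=
  {m | (∃ i, s i = .inl m) ∧ ∃ i, s i = .inr m}

def occupiedIndices (s : Fin r → Fin n ⊕ Fin n) : Finset (Fin n) :=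
  {m | ∃ i, s i = .inl m ∨ s i = .inr m}

theorem pairedIndices_comp_perm (s : Fin r → Fin n ⊕ Fin n) (σ : Equiv.Perm (Fin r)) :
    pairedIndices (s ∘ σ) = pairedIndices s := by
  have hex : ∀ x, (∃ i, s (σ i) = x) ↔ ∃ i, s i = x := fun x =>
    (σ.surjective.exists (p := fun i => s i = x)).symm
  ext m
  simp only [pairedIndices, Function.comp_apply, hex]

theorem pairedIndices_cons_cons {s : Fin r → Fin n ⊕ Fin n} {l l' : Fin n}
    {x y : Fin n ⊕ Fin n} (hl : l ∉ occupiedIndices s) (hl' : l' ∉ occupiedIndices s)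
    (hll' : l ≠ l')
    (hx : x = .inl l ∨ x = .inr l) (hy : y = .inl l' ∨ y = .inr l') :
    pairedIndices (Fin.cons x (Fin.cons y s) : Fin (r + 2) → Fin n ⊕ Fin n) =
      pairedIndices s := by
  ext m
  simp only [occupiedIndices, Finset.mem_filter, Finset.mem_univ, true_and, not_exists,
    not_or] at hl hl'
  simp only [pairedIndices, Finset.mem_filter, Finset.mem_univ, true_and, Fin.exists_fin_succ,
    Fin.cons_zero, Fin.cons_succ]
  rcases hx with rfl | rfl <;> rcases hy with rfl | rfl <;> grind

theorem card_pairedIndices_cons_inl_cons_inr {s : Fin r → Fin n ⊕ Fin n} {l : Fin n}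
    (hl : l ∉ occupiedIndices s) :
    #(pairedIndices (Fin.cons (.inl l) (Fin.cons (.inr l) s) : Fin (r + 2) → _)) =
      #(pairedIndices s) + 1 := by
  simp only [occupiedIndices, Finset.mem_filter, Finset.mem_univ, true_and, not_exists,
    not_or] at hl
  have hins : pairedIndices (Fin.cons (.inl l) (Fin.cons (.inr l) s) : Fin (r + 2) → _) =
      insert l (pairedIndices s) := by
    ext m
    simp only [pairedIndices, Finset.mem_insert, Finset.mem_filter, Finset.mem_univ, true_and,
      Fin.exists_fin_succ, Fin.cons_zero, Fin.cons_succ]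
    grind
  rw [hins, Finset.card_insert_of_notMem]
  simp [pairedIndices, hl]

theorem exists_perm_apply_zero_apply_one {m : ℕ} {i j : Fin (m + 2)} (hij : i ≠ j) :
    ∃ σ : Equiv.Perm (Fin (m + 2)), σ 0 = i ∧ σ 1 = j := by
  refine ⟨Equiv.swap 0 i * Equiv.swap 1 (Equiv.swap 0 i j), ?_, ?_⟩
  · have : Equiv.swap 0 i j ≠ 0 := by
      rw [Ne, Equiv.swap_apply_eq_iff, Equiv.swap_apply_left]
      exact hij.symm
    rw [Equiv.Perm.mul_apply, Equiv.swap_apply_of_ne_of_ne zero_ne_one this.symm,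
      Equiv.swap_apply_left]
  · rw [Equiv.Perm.mul_apply, Equiv.swap_apply_left, Equiv.swap_apply_self]

end Selections

theorem LinearMap.BilinForm.IsSymplecticFamily.isIsotropic_of_pairedIndices_eq_empty
    {K V : Type*} [Field K] [AddCommGroup V] [Module K V] {B : LinearMap.BilinForm K V}
    {n r : ℕ} {e f : Fin n → V} (hB : B.IsAlt) (h : B.IsSymplecticFamily e f)
    {s : Fin r → Fin n ⊕ Fin n} (hs : pairedIndices s = ∅) :
    B.IsIsotropic (Sum.elim e f ∘ s) := by
  have hunpaired : ∀ i j m, s i = .inl m → s j ≠ .inr m := fun i j m hi hj => by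
    have : m ∈ pairedIndices s := by simpa [pairedIndices] using ⟨⟨i, hi⟩, ⟨j, hj⟩⟩
    simp [hs] at this
  intro i j
  rcases hi : s i with a | a <;> rcases hj : s j with c | c <;>
    simp only [Function.comp_apply, hi, hj, Sum.elim_inl, Sum.elim_inr]
  · exact h.apply_e_e a c
  · rw [h.apply_e_f, if_neg]
    rintro rfl
    exact hunpaired i j a hi hj
  · rw [← LinearMap.IsAlt.neg hB, h.apply_e_f, if_neg, neg_zero]
    rintro rfl
    exact hunpaired j i c hj hi
  · exact h.apply_f_f a c

section Effective

open Finset LinearMap.BilinForm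

variable {V : Type*} [AddCommGroup V] [Module ℝ V] {n : ℕ} {e f : Fin n → V}

theorem sympContract_apply {m : ℕ} (ω : V [⋀^Fin (m + 2)]→ₗ[ℝ] ℝ) (u : Fin m → V) :
    sympContract e f ω u = ∑ j, ω.toBilinForm u (e j) (f j) :=
  map_sum (AddMonoidHom.mk' (fun g : V [⋀^Fin m]→ₗ[ℝ] ℝ => g u) fun _ _ => rfl) _ _

theorem isEffective_iff {m : ℕ} {ω : V [⋀^Fin (m + 2)]→ₗ[ℝ] ℝ} :
    IsEffective e f ω ↔ ∀ u : Fin m → V, ∑ j, ω.toBilinForm u (e j) (f j) = 0 := by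
  refine ⟨fun h u => ?_, fun h m' hm => ?_⟩
  · rw [← sympContract_apply, ← ω.domDomCongr_refl, ← finCongr_refl, h m rfl,
      AlternatingMap.zero_apply]
  · obtain rfl : m = m' := by omega
    ext u
    rw [finCongr_refl, AlternatingMap.domDomCongr_refl, sympContract_apply, h,
      AlternatingMap.zero_apply]

theorem IsEffective.sub_smul {k : ℕ} {ω ω' : V [⋀^Fin k]→ₗ[ℝ] ℝ}
    (hω : IsEffective e f ω)
    (hω' : IsEffective e f ω') (c : ℝ) : IsEffective e f (ω' - c • ω) := by
  intro m hm
  subst hm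
  refine isEffective_iff.mpr (fun u => ?_) m rfl
  have h := isEffective_iff.mp hω u
  have h' := isEffective_iff.mp hω' u
  simp only [AlternatingMap.toBilinForm_apply, AlternatingMap.sub_apply,
    AlternatingMap.smul_apply, smul_eq_mul] at h h' ⊢
  rw [sum_sub_distrib, ← mul_sum, h, h', mul_zero, sub_zero]

theorem IsEffective.symplecticTransvection_comp {B : LinearMap.BilinForm ℝ V}
    (h : IsSymplecticFamily B e f) {m : ℕ} {ω : V [⋀^Fin (m + 2)]→ₗ[ℝ] ℝ}
    (hω : IsEffective e f ω) {a : V} (ha : a ∈ Submodule.span ℝ (Set.range f)) (t : ℝ) :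
    IsEffective (B.symplecticTransvection a t ∘ e) f ω := by
  rw [isEffective_iff] at hω ⊢
  intro u
  calc ∑ j, ω.toBilinForm u (B.symplecticTransvection a t (e j)) (f j)
      = ∑ j, ω.toBilinForm u (e j) (f j) +
          t * ω.toBilinForm u a (∑ j, B (e j) a • f j) := by
        simp only [symplecticTransvection_apply, map_add, map_smul, map_sum,
          LinearMap.add_apply, LinearMap.smul_apply, smul_eq_mul, sum_add_distrib, mul_sum,
          mul_assoc]
    _ = 0 := by
      rw [hω u, h.sum_apply_smul_eq ha, (ω.toBilinForm_isAlt u).self_eq_zero, mul_zero,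
        add_zero]

section Induction

variable (B : LinearMap.BilinForm ℝ V) (f : Fin n → V) {m : ℕ}
  (ω : V [⋀^Fin (m + 2)]→ₗ[ℝ] ℝ)

/-- The statement proved by induction on `p` in `IsEffective.eq_zero_of_forall_isIsotropic`;
`e` varies because the induction step replaces it by its image under a transvection along
`span f`. -/
def VanishesUpToPairs (p : ℕ) : Prop :=
  ∀ e, IsSymplecticFamily B e f → IsEffective e f ω →
    ∀ s : Fin (m + 2) → Fin n ⊕ Fin n, #(pairedIndices s) ≤ p →
      ω (Sum.elim e f ∘ s) = 0

variable {B f ω}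

namespace VanishesUpToPairs

variable {p : ℕ} {e : Fin n → V} {r : Fin m → Fin n ⊕ Fin n}

theorem toBilinForm_eq (hlow : VanishesUpToPairs B f ω p) (hB : B.IsAlt)
    (h : IsSymplecticFamily B e f) (hω : IsEffective e f ω) (hr : #(pairedIndices r) ≤ p)
    {l l' : Fin n} (hll' : l ≠ l') (hl : l ∉ occupiedIndices r)
    (hl' : l' ∉ occupiedIndices r) :
    ω.toBilinForm (Sum.elim e f ∘ r) (e l) (f l) =
      ω.toBilinForm (Sum.elim e f ∘ r) (e l') (f l') := by
  set w := Sum.elim e f ∘ r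
  set β := ω.toBilinForm w
  have hβ : β.IsAlt := ω.toBilinForm_isAlt w
  have hlow' : ∀ e', IsSymplecticFamily B e' f → IsEffective e' f ω →
      Sum.elim e' f ∘ r = w →
      ∀ x y, (x = .inl l ∨ x = .inr l) → (y = .inl l' ∨ y = .inr l') →
        β (Sum.elim e' f x) (Sum.elim e' f y) = 0 := fun e' h' hω' hw x y hx hy => by
    have := hlow e' h' hω' (Fin.cons x (Fin.cons y r))
      (by rw [pairedIndices_cons_cons hl hl' hll' hx hy]; exact hr)
    rwa [Fin.comp_cons, Fin.comp_cons, hw] at this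
  simp only [occupiedIndices, mem_filter, mem_univ, true_and, not_exists, not_or] at hl hl'
  set a := f l + f l'
  have ha : a ∈ Submodule.span ℝ (Set.range f) :=
    add_mem (Submodule.subset_span ⟨l, rfl⟩) (Submodule.subset_span ⟨l', rfl⟩)
  have hτ : ∀ j, B.symplecticTransvection a 1 (e j) =
      e j + ((if j = l then 1 else 0) + (if j = l' then 1 else 0) : ℝ) • a := fun j => by
    rw [symplecticTransvection_apply, one_mul, map_add, h.apply_e_f, h.apply_e_f]
  have hτw : Sum.elim (B.symplecticTransvection a 1 ∘ e) f ∘ r = w := funext fun i => by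
    rcases hri : r i with j | j
    · have hjl : j ≠ l := fun hjl => (hl i).1 (hri.trans (by rw [hjl]))
      have hjl' : j ≠ l' := fun hjl => (hl' i).1 (hri.trans (by rw [hjl]))
      simp [w, hri, hτ, hjl, hjl']
    · simp [w, hri]
  have h0 := hlow' _ (h.symplecticTransvection_comp hB ha 1)
    (hω.symplecticTransvection_comp h ha 1) hτw (.inl l) (.inl l') (Or.inl rfl) (Or.inl rfl)
  have h1 := hlow' e h hω rfl (.inl l) (.inl l') (Or.inl rfl) (Or.inl rfl)
  have h2 := hlow' e h hω rfl (.inl l) (.inr l') (Or.inl rfl) (Or.inr rfl)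
  have h3 := hlow' e h hω rfl (.inr l) (.inl l') (Or.inr rfl) (Or.inl rfl)
  simp only [Sum.elim_inl, Sum.elim_inr, Function.comp_apply, hτ, if_pos, if_neg hll',
    if_neg hll'.symm, add_zero, zero_add, one_smul, a, map_add, LinearMap.add_apply]
    at h0 h1 h2 h3
  linarith [hβ.self_eq_zero (f l), hβ.self_eq_zero (f l'),
    LinearMap.IsAlt.neg hβ (f l) (f l'), LinearMap.IsAlt.neg hβ (e l') (f l')]

theorem toBilinForm_eq_zero (hlow : VanishesUpToPairs B f ω p) (hB : B.IsAlt)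
    (h : IsSymplecticFamily B e f) (hω : IsEffective e f ω) (hr : #(pairedIndices r) ≤ p)
    {l : Fin n} (hl : l ∉ occupiedIndices r) :
    ω.toBilinForm (Sum.elim e f ∘ r) (e l) (f l) = 0 := by
  set β := ω.toBilinForm (Sum.elim e f ∘ r)
  have hterm : ∀ j, β (e j) (f j) = if j ∈ occupiedIndices r then 0 else β (e l) (f l) := by
    intro j
    split_ifs with hj
    · obtain ⟨i, hi | hi⟩ := by simpa [occupiedIndices] using hj
      · exact ω.toBilinForm_apply_eq_zero_of_mem_range (.inl ⟨i, by simp [hi]⟩)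
      · exact ω.toBilinForm_apply_eq_zero_of_mem_range (.inr ⟨i, by simp [hi]⟩)
    · rcases eq_or_ne j l with rfl | hjl
      · rfl
      · exact hlow.toBilinForm_eq hB h hω hr hjl hj hl
  -- effectivity now reads `#(indices not occupied by r) * β (e l) (f l) = 0`
  have hsum := isEffective_iff.mp hω (Sum.elim e f ∘ r)
  rw [sum_congr rfl fun j _ => hterm j, sum_ite, sum_const_zero, zero_add, sum_const,
    nsmul_eq_mul] at hsum
  refine (mul_eq_zero.mp hsum).resolve_left (Nat.cast_ne_zero.mpr ?_)
  exact card_ne_zero.mpr ⟨l, by simp [hl]⟩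

theorem succ (hlow : VanishesUpToPairs B f ω p) (hB : B.IsAlt) :
    VanishesUpToPairs B f ω (p + 1) := by
  intro e h hω s hs
  by_cases hsp : #(pairedIndices s) ≤ p
  · exact hlow e h hω s hsp
  by_cases hinj : Function.Injective s
  swap
  · exact ω.map_eq_zero_of_not_injective _ fun hv => hinj hv.of_comp
  obtain ⟨l, hl⟩ : (pairedIndices s).Nonempty := card_pos.mp (by omega)
  obtain ⟨⟨i, hi⟩, ⟨j, hj⟩⟩ := by simpa [pairedIndices] using hl
  obtain ⟨σ, hσ0, hσ1⟩ := exists_perm_apply_zero_apply_one (i := i) (j := j)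
    (by rintro rfl; simp [hi] at hj)
  set r : Fin m → Fin n ⊕ Fin n := fun k => s (σ k.succ.succ)
  have hsσ : s ∘ σ = Fin.cons (.inl l) (Fin.cons (.inr l) r) := by
    funext k
    refine Fin.cases ?_ (Fin.cases ?_ fun k => ?_) k
    · simp [hσ0, hi]
    · simp [hσ1, hj]
    · simp [r]
  have hlr : l ∉ occupiedIndices r := by
    simp only [occupiedIndices, mem_filter, mem_univ, true_and, not_exists, not_or]
    refine fun k => ⟨fun hk => ?_, fun hk => ?_⟩
    · have := σ.injective (hinj (hk.trans (hσ0 ▸ hi).symm))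
      simp at this
    · have := σ.injective (hinj (hk.trans (hσ1 ▸ hj).symm))
      simp [Fin.ext_iff] at this
  have hr : #(pairedIndices r) ≤ p := by
    have := card_pairedIndices_cons_inl_cons_inr hlr
    rw [← hsσ, pairedIndices_comp_perm] at this
    omega
  have hzero := hlow.toBilinForm_eq_zero hB h hω hr hlr
  rw [← smul_eq_zero_iff_eq (Equiv.Perm.sign σ), ← ω.map_perm, Function.comp_assoc, hsσ,
    Fin.comp_cons, Fin.comp_cons]
  exact hzero

end VanishesUpToPairs

end Induction

theorem IsEffective.eq_zero_of_forall_isIsotropic {B : LinearMap.BilinForm ℝ V} (hB : B.IsAlt)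
    (b : Basis (Fin n ⊕ Fin n) ℝ V)
    (h : IsSymplecticFamily B (fun i => b (.inl i)) (fun i => b (.inr i))) {k : ℕ}
    {ω : V [⋀^Fin k]→ₗ[ℝ] ℝ}
    (hω : IsEffective (fun i => b (.inl i)) (fun i => b (.inr i)) ω)
    (hiso : ∀ v, B.IsIsotropic v → ω v = 0) : ω = 0 := by
  obtain hk | ⟨m, rfl⟩ : k < 2 ∨ ∃ m, k = m + 2 := by
    rcases lt_or_ge k 2 with hk | hk
    · exact .inl hk
    · exact .inr ⟨k - 2, by omega⟩
  · ext v
    refine hiso v fun i j => ?_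
    rw [show i = j from Fin.ext (by omega), hB.self_eq_zero]
  · have hall : ∀ p, VanishesUpToPairs B (fun i => b (.inr i)) ω p := by
      intro p
      induction p with
      | zero =>
        intro e h' _ s hs
        exact hiso _
          (h'.isIsotropic_of_pairedIndices_eq_empty hB (card_eq_zero.mp (by omega)))
      | succ p ih => exact ih.succ hB
    refine b.ext_alternating fun s _ => ?_
    have hsel :
        (Sum.elim (fun i => b (.inl i)) fun i => b (.inr i)) ∘ s = fun i => b (s i) :=
      funext fun i => by simp only [Function.comp_apply]; rcases s i with j | j <;> rfl
    rw [AlternatingMap.zero_apply, ← hsel]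
    exact hall _ _ h hω s le_rfl

end Effective

theorem effective_forms_vanishing_on_same_isotropics_are_proportional_general
    {V : Type*} [AddCommGroup V] [Module ℝ V] {n k : ℕ}
    (Ω : AlternatingMap ℝ V ℝ (Fin 2))
    (b : Module.Basis (Fin n ⊕ Fin n) ℝ V)
    (hee : ∀ i j, Ω ![b (Sum.inl i), b (Sum.inl j)] = 0)
    (hff : ∀ i j, Ω ![b (Sum.inr i), b (Sum.inr j)] = 0)
    (hef : ∀ i j, Ω ![b (Sum.inl i), b (Sum.inr j)] = if i = j then 1 else 0)
    (ω ω' : AlternatingMap ℝ V ℝ (Fin k))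
    (hω : IsEffective (fun j => b (Sum.inl j)) (fun j => b (Sum.inr j)) ω)
    (hω' : IsEffective (fun j => b (Sum.inl j)) (fun j => b (Sum.inr j)) ω')
    (hsame : ∀ L : Submodule ℝ V, Module.finrank ℝ L = k →
      (∀ X ∈ L, ∀ Y ∈ L, Ω ![X, Y] = 0) →
      ((∀ v : Fin k → V, (∀ i, v i ∈ L) → ω v = 0) ↔
        (∀ v : Fin k → V, (∀ i, v i ∈ L) → ω' v = 0))) :
    (∃ c : ℝ, ω' = c • ω) ∨ (∃ c : ℝ, ω = c • ω') := by
  have : FiniteDimensional ℝ V := Module.Finite.of_basis b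
  have hB : (Ω.toBilinForm ![]).IsAlt := Ω.toBilinForm_isAlt ![]
  have hsymp : (Ω.toBilinForm ![]).IsSymplecticFamily (fun j => b (.inl j))
      (fun j => b (.inr j)) := ⟨hee, hff, hef⟩
  obtain ⟨c, hc⟩ := LinearMap.BilinForm.exists_forall_isIsotropic_eq_mul hB
    (hsymp.nondegenerate hB b) fun v hv =>
      LinearMap.BilinForm.apply_eq_zero_iff_of_forall_submodule hsame hv
  refine .inl ⟨c, sub_eq_zero.mp (IsEffective.eq_zero_of_forall_isIsotropic hB b hsymp
    (hω.sub_smul hω' c) fun v hv => ?_)⟩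
  rw [AlternatingMap.sub_apply, AlternatingMap.smul_apply, hc v hv, smul_eq_mul, sub_self]

/-- Two effective `k`-forms (`k ≤ n`) on a symplectic vector space `(V, Ω)` that vanish
on exactly the same `k`-dimensional isotropic subspaces are linearly dependent
(one is a scalar multiple of the other). -/
theorem effective_forms_vanishing_on_same_isotropics_are_proportional
    {V : Type*} [AddCommGroup V] [Module ℝ V] {n k : ℕ} (hk : k ≤ n)
    (Ω : AlternatingMap ℝ V ℝ (Fin 2))
    (b : Module.Basis (Fin n ⊕ Fin n) ℝ V)
    (hee : ∀ i j, Ω ![b (Sum.inl i), b (Sum.inl j)] = 0)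
    (hff : ∀ i j, Ω ![b (Sum.inr i), b (Sum.inr j)] = 0)
    (hef : ∀ i j, Ω ![b (Sum.inl i), b (Sum.inr j)] = if i = j then 1 else 0)
    (ω ω' : AlternatingMap ℝ V ℝ (Fin k))
    (hω : IsEffective (fun j => b (Sum.inl j)) (fun j => b (Sum.inr j)) ω)
    (hω' : IsEffective (fun j => b (Sum.inl j)) (fun j => b (Sum.inr j)) ω')
    (hsame : ∀ L : Submodule ℝ V, Module.finrank ℝ L = k →
      (∀ X ∈ L, ∀ Y ∈ L, Ω ![X, Y] = 0) →
      ((∀ v : Fin k → V, (∀ i, v i ∈ L) → ω v = 0) ↔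
        (∀ v : Fin k → V, (∀ i, v i ∈ L) → ω' v = 0))) :
    (∃ c : ℝ, ω' = c • ω) ∨ (∃ c : ℝ, ω = c • ω') :=
  effective_forms_vanishing_on_same_isotropics_are_proportional_general Ω b hee hff hef ω ω' hω hω'
    hsame
end

section
/- Let α be a nonzero decomposable effective 3-form on (V, Ω), i.e. α = ξ₁∧ξ₂∧ξ₃ ≠ 0 for covectors ξᵢ ∈ V* and α∧Ω = 0. Then the kernel E_α = {X ∈ V : ι_Xα = 0} is a Lagrangian subspace of (V, Ω): it has dimension 3 and Ω(X,Y) = 0 for all X, Y ∈ E_α. -/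
open scoped TensorProduct

/-! Writing `ξ = (ξ₁, ξ₂, ξ₃) : V → ℝ³`, the form `ξ₁ ∧ ξ₂ ∧ ξ₃` is `v ↦ det (ξ (vⱼ))`. If it is
nonzero, `ξ` is onto, and `E_α` is exactly `ker ξ`, of dimension `6 - 3`.
Pick `u₁, u₂, u₃` with `ξᵢ(uⱼ) = δᵢⱼ`. For `X, Y ∈ ker ξ`, every shuffle term of
`(α ∧ Ω)(u₁, u₂, u₃, X, Y)` other than the trivial one feeds `X` or `Y` to `α`, hence vanishes, so
`0 = (α ∧ Ω)(u₁, u₂, u₃, X, Y) = α(u) Ω(X, Y) = Ω(X, Y)`. -/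

open Matrix

theorem AlternatingMap.map_eq_zero_of_mem_ker_curryLeft {R M N : Type*} [CommRing R]
    [AddCommGroup M] [Module R M] [AddCommGroup N] [Module R N] {n : ℕ}
    (f : M [⋀^Fin n.succ]→ₗ[R] N) {v : Fin n.succ → M} {t : Fin n.succ}
    (ht : v t ∈ LinearMap.ker f.curryLeft) : f v = 0 := by
  have head : ∀ w : Fin n.succ → M, w 0 ∈ LinearMap.ker f.curryLeft → f w = 0 := fun w hw => by
    rw [← cons_head_tail w, ← curryLeft_apply_apply, show f.curryLeft (vecHead w) = 0 from hw]
    rfl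
  rcases eq_or_ne t 0 with rfl | ht0
  · exact head v ht
  · rw [← neg_eq_zero, ← f.map_swap v ht0]
    exact head _ (by simpa using ht)

open Equiv in
theorem AlternatingMap.domCoprod_apply_sumElim {R M N₁ N₂ : Type*} [CommRing R]
    [AddCommGroup M] [Module R M] [AddCommGroup N₁] [Module R N₁] [AddCommGroup N₂] [Module R N₂]
    {ιa ιb : Type*} [Fintype ιa] [DecidableEq ιa] [Fintype ιb] [DecidableEq ιb]
    (a : M [⋀^ιa]→ₗ[R] N₁) (b : M [⋀^ιb]→ₗ[R] N₂) (u : ιa → M) (w : ιb → M)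
    (ha : ∀ (v : ιa → M) (i : ιa) (j : ιb), v i = w j → a v = 0) :
    a.domCoprod b (Sum.elim u w) = a u ⊗ₜ b w := by
  rw [domCoprod_apply, _root_.sum_apply]
  refine (Fintype.sum_eq_single (Quotient.mk'' 1) fun q hq => ?_).trans ?_
  · induction q using Quotient.inductionOn' with | _ σ
    -- a shuffle that keeps `ιa` inside `ιa` is in the trivial class
    obtain ⟨i, j, hij⟩ : ∃ i j, σ (Sum.inl i) = Sum.inr j := by
      by_contra! hσ
      refine hq (Quotient.sound' (QuotientGroup.leftRel_apply.2 ?_))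
      rw [mul_one, inv_mem_iff]
      refine Perm.mem_sumCongrHom_range_of_perm_mapsTo_inl ?_
      rintro _ ⟨i, rfl⟩
      cases hσi : σ (Sum.inl i) with
      | inl k => exact ⟨k, rfl⟩
      | inr j => exact absurd hσi (hσ i j)
    have : a (fun k => Sum.elim u w (σ (Sum.inl k))) = 0 := ha _ i j (by simp [hij])
    simp [domCoprod.summand_mk'', this]
  · simp [domCoprod.summand_mk'']

theorem MultilinearMap.alternatization_domDomCongr {R M N : Type*} [CommRing R]
    [AddCommGroup M] [Module R M] [AddCommGroup N] [Module R N]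
    {ι κ : Type*} [Fintype ι] [DecidableEq ι] [Fintype κ] [DecidableEq κ] (e : ι ≃ κ)
    (f : MultilinearMap R (fun _ : ι => M) N) :
    (alternatization f).domDomCongr e = alternatization (f.domDomCongr e) := by
  ext v
  simp only [AlternatingMap.domDomCongr_apply, alternatization_apply, domDomCongr_apply]
  refine Fintype.sum_equiv e.permCongr _ _ fun σ => ?_
  rw [Equiv.Perm.sign_permCongr]
  simp

theorem Matrix.det_updateRow_one {R ι : Type*} [CommRing R] [Fintype ι] [DecidableEq ι] (j : ι)
    (b : ι → R) : ((1 : Matrix ι ι R).updateRow j b).det = b j := by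
  rw [← transpose_one, updateRow_transpose, det_transpose, ← cramer_apply, cramer_one]
  rfl

section Determinant

variable {R V : Type*} [CommRing R] [AddCommGroup V] [Module R V]
  {ι : Type*} [Fintype ι] [DecidableEq ι] (L : V →ₗ[R] ι → R)

theorem detRowAlternating_compLinearMap_eq_zero_of_mem_ker {v : ι → V} {t : ι}
    (ht : v t ∈ LinearMap.ker L) : detRowAlternating.compLinearMap L v = 0 :=
  det_eq_zero_of_row_eq_zero t fun j => congrFun (LinearMap.mem_ker.1 ht) j

theorem detRowAlternating_compLinearMap_eq_one {u : ι → V} (hu : ∀ j, L (u j) = Pi.single j 1) :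
    detRowAlternating.compLinearMap L u = 1 := by
  show det (of fun i => L (u i)) = 1
  rw [← det_one (n := ι) (R := R)]
  congr 1
  ext i k
  simp [hu, one_apply, Pi.single_apply, eq_comm]

theorem detRowAlternating_compLinearMap_update {u : ι → V} (hu : ∀ j, L (u j) = Pi.single j 1)
    (j : ι) (X : V) : detRowAlternating.compLinearMap L (Function.update u j X) = L X j := by
  rw [← det_updateRow_one j (L X)]
  show det (of fun i => L (Function.update u j X i)) = _
  congr 1
  ext i k
  rcases eq_or_ne i j with rfl | hij
  · simp
  · simp [hij, hu, one_apply, Pi.single_apply, eq_comm]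

end Determinant

theorem ker_curryLeft_detRowAlternating_compLinearMap {R V : Type*} [CommRing R]
    [AddCommGroup V] [Module R V] {n : ℕ} (L : V →ₗ[R] Fin n.succ → R)
    (hL : Function.Surjective L) :
    LinearMap.ker (detRowAlternating.compLinearMap L).curryLeft = LinearMap.ker L := by
  choose u hu using fun j => hL (Pi.single j 1)
  ext X
  constructor
  · intro hX
    ext j
    rw [← detRowAlternating_compLinearMap_update L hu j X]
    exact AlternatingMap.map_eq_zero_of_mem_ker_curryLeft _ (t := j) (by simpa using hX)
  · intro hX
    ext v
    exact detRowAlternating_compLinearMap_eq_zero_of_mem_ker L (t := 0) (by simpa using hX)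

theorem surjective_of_detRowAlternating_compLinearMap_ne_zero {K V : Type*} [Field K]
    [AddCommGroup V] [Module K V] {ι : Type*} [Fintype ι] [DecidableEq ι] (L : V →ₗ[K] ι → K)
    (h : detRowAlternating.compLinearMap L ≠ 0) : Function.Surjective L := by
  obtain ⟨v, hv⟩ := DFunLike.ne_iff.1 h
  set A : Matrix ι ι K := of fun i => L (v i)
  have hA : Function.Surjective fun c => vecMul c A :=
    vecMul_surjective_iff_isUnit.2 <| (isUnit_iff_isUnit_det A).2 (isUnit_iff_ne_zero.2 hv)
  intro y
  obtain ⟨c, rfl⟩ := hA y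
  refine ⟨∑ i, c i • v i, funext fun j => ?_⟩
  simp [A, vecMul, dotProduct]

section Wedge

variable {V : Type*} [AddCommGroup V] [Module ℝ V] {A : Type*} [CommRing A] [Algebra ℝ A]

theorem wedge_alternatization {k l : ℕ} (f : MultilinearMap ℝ (fun _ : Fin k => V) A)
    (g : MultilinearMap ℝ (fun _ : Fin l => V) A) :
    wedge (MultilinearMap.alternatization f) (MultilinearMap.alternatization g) =
      MultilinearMap.alternatization
        (((LinearMap.mul' ℝ A).compMultilinearMap (f.domCoprod g)).domDomCongr finSumFinEquiv) := by
  rw [wedge, ← MultilinearMap.domCoprod_alternization, MultilinearMap.alternatization_domDomCongr,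
    ← LinearMap.compMultilinearMap_alternatization]
  rfl

theorem alternatization_oneForm (ξ : V →ₗ[ℝ] A) :
    MultilinearMap.alternatization (oneForm ξ : MultilinearMap ℝ (fun _ : Fin 1 => V) A) =
      oneForm ξ := by
  simp [AlternatingMap.coe_alternatization]

theorem wedge_apply_sumElim {k l : ℕ} (α : AlternatingMap ℝ V A (Fin k))
    (β : AlternatingMap ℝ V A (Fin l)) (u : Fin k → V) (w : Fin l → V)
    (hα : ∀ (v : Fin k → V) (i : Fin k) (j : Fin l), v i = w j → α v = 0) :
    wedge α β (fun i => Sum.elim u w (finSumFinEquiv.symm i)) = α u * β w := by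
  rw [wedge, LinearMap.compAlternatingMap_apply, AlternatingMap.domDomCongr_apply]
  have hv : (fun i => Sum.elim u w (finSumFinEquiv.symm i)) ∘ finSumFinEquiv = Sum.elim u w := by
    ext s; simp
  rw [hv, AlternatingMap.domCoprod_apply_sumElim α β u w hα, LinearMap.mul'_apply]

theorem wedge_oneForm_three (ξ₁ ξ₂ ξ₃ : Module.Dual ℝ V) :
    wedge (oneForm ξ₁) (wedge (oneForm ξ₂) (oneForm ξ₃)) =
      detRowAlternating.compLinearMap (LinearMap.pi ![ξ₁, ξ₂, ξ₃]) := by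
  rw [← alternatization_oneForm ξ₁, ← alternatization_oneForm ξ₂, ← alternatization_oneForm ξ₃,
    wedge_alternatization, wedge_alternatization]
  ext v
  simp only [AlternatingMap.compLinearMap_apply, detRowAlternating,
    MultilinearMap.alternatization_apply]
  refine Finset.sum_congr rfl fun σ _ => ?_
  congr 1
  show ξ₁ (v (σ 0)) * (ξ₂ (v (σ 1)) * ξ₃ (v (σ 2))) = ∏ i : Fin 3, ![ξ₁, ξ₂, ξ₃] i (v (σ i))
  rw [Fin.prod_univ_three, mul_assoc]
  rfl

end Wedge

theorem kernel_of_decomposable_effective_is_lagrangian_general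
    {V : Type*} [AddCommGroup V] [Module ℝ V] [FiniteDimensional ℝ V]
    (hdim : Module.finrank ℝ V = 6)
    (Ω : AlternatingMap ℝ V ℝ (Fin 2))
    (α : AlternatingMap ℝ V ℝ (Fin 3))
    (hdec : ∃ ξ₁ ξ₂ ξ₃ : Module.Dual ℝ V,
      α = wedge (oneForm ξ₁) (wedge (oneForm ξ₂) (oneForm ξ₃)))
    (hα : α ≠ 0)
    (heff : wedge α Ω = 0) :
    Module.finrank ℝ (LinearMap.ker α.curryLeft) = 3 ∧
    ∀ X ∈ LinearMap.ker α.curryLeft, ∀ Y ∈ LinearMap.ker α.curryLeft,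
      Ω ![X, Y] = 0 := by
  obtain ⟨ξ₁, ξ₂, ξ₃, hαξ⟩ := hdec
  set L : V →ₗ[ℝ] Fin 3 → ℝ := LinearMap.pi ![ξ₁, ξ₂, ξ₃]
  obtain rfl : α = detRowAlternating.compLinearMap L := hαξ.trans (wedge_oneForm_three ξ₁ ξ₂ ξ₃)
  have hL := surjective_of_detRowAlternating_compLinearMap_ne_zero L hα
  rw [ker_curryLeft_detRowAlternating_compLinearMap L hL]
  refine ⟨?_, fun X hX Y hY => ?_⟩
  · have := L.finrank_range_add_finrank_ker
    rw [LinearMap.range_eq_top.2 hL, finrank_top, hdim, Module.finrank_fin_fun] at this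
    omega
  · choose u hu using fun j => hL (Pi.single j 1)
    have hXY : ∀ j, ![X, Y] j ∈ LinearMap.ker L := by
      intro j; fin_cases j <;> assumption
    have key := wedge_apply_sumElim _ Ω u ![X, Y] fun v i j hv =>
      detRowAlternating_compLinearMap_eq_zero_of_mem_ker L (t := i) (hv ▸ hXY j)
    rw [detRowAlternating_compLinearMap_eq_one L hu, one_mul] at key
    rw [← key, heff]
    rfl

/-- The kernel `E_α = {X : ι_X α = 0}` of a nonzero decomposable effective 3-form `α`
on a symplectic `(V, Ω)` of dimension 6 is a Lagrangian subspace: it is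
3-dimensional and isotropic. -/
theorem kernel_of_decomposable_effective_is_lagrangian
    {V : Type*} [AddCommGroup V] [Module ℝ V] [FiniteDimensional ℝ V]
    (hdim : Module.finrank ℝ V = 6)
    (Ω : AlternatingMap ℝ V ℝ (Fin 2))
    (hnd : ∀ X : V, (∀ Y : V, Ω ![X, Y] = 0) → X = 0)
    (α : AlternatingMap ℝ V ℝ (Fin 3))
    (hdec : ∃ ξ₁ ξ₂ ξ₃ : Module.Dual ℝ V,
      α = wedge (oneForm ξ₁) (wedge (oneForm ξ₂) (oneForm ξ₃)))
    (hα : α ≠ 0)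
    (heff : wedge α Ω = 0) :
    Module.finrank ℝ (LinearMap.ker α.curryLeft) = 3 ∧
    ∀ X ∈ LinearMap.ker α.curryLeft, ∀ Y ∈ LinearMap.ker α.curryLeft,
      Ω ![X, Y] = 0 :=
  kernel_of_decomposable_effective_is_lagrangian_general hdim Ω α hdec hα heff
end

section
/- Let U and W be open convex neighborhoods of 0 in ℝ³ and let A : U × W → GL(m,ℝ) be smooth, and suppose that for each j ∈ {1,2,3} the matrix-valued function (∂A/∂xⱼ)(x,y)·A(x,y)⁻¹ does not depend on y ∈ W (its partial derivatives in all y-directions vanish identically). Then there exist an open neighborhood U′ ⊆ U of 0 and smooth maps G : U′ → GL(m,ℝ) and F : W → GL(m,ℝ) such that A(x,y) = G(x)·F(y) for all (x,y) ∈ U′ × W. -/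
/-- The `x`-logarithmic-derivative matrix `(∂A/∂xⱼ)·A⁻¹`, whose `(k,l)` entry is the
entrywise partial derivative of `A` in the `j`-th `x`-direction, times `A⁻¹`. -/
noncomputable def xLogDeriv {m : ℕ}
    (A : (Fin 3 → ℝ) × (Fin 3 → ℝ) → Matrix (Fin m) (Fin m) ℝ) (j : Fin 3)
    (p : (Fin 3 → ℝ) × (Fin 3 → ℝ)) : Matrix (Fin m) (Fin m) ℝ :=
  (Matrix.of fun k l => fderiv ℝ (fun q => A q k l) p ((Pi.single j 1 : Fin 3 → ℝ), 0))
    * (A p)⁻¹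

section Aux

attribute [local instance] Matrix.linftyOpNormedRing Matrix.linftyOpNormedAlgebra

variable {m : ℕ}

/-- The entry-extraction continuous linear map. -/
noncomputable def entryCLM (k l : Fin m) : Matrix (Fin m) (Fin m) ℝ →L[ℝ] ℝ :=
  LinearMap.toContinuousLinearMap
    { toFun := fun M => M k l
      map_add' := fun _ _ => rfl
      map_smul' := fun _ _ => rfl }

lemma entryCLM_apply (k l : Fin m) (M : Matrix (Fin m) (Fin m) ℝ) :
    entryCLM k l M = M k l := rfl

lemma fderiv_entry {E : Type*} [NormedAddCommGroup E] [NormedSpace ℝ E]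
    {A : E → Matrix (Fin m) (Fin m) ℝ} {p : E} (h : DifferentiableAt ℝ A p) (k l : Fin m) :
    fderiv ℝ (fun q => A q k l) p = (entryCLM k l).comp (fderiv ℝ A p) :=
  ((entryCLM k l).hasFDerivAt.comp p h.hasFDerivAt).fderiv

lemma contDiffOn_matrix {E : Type*} [NormedAddCommGroup E] [NormedSpace ℝ E]
    {A : E → Matrix (Fin m) (Fin m) ℝ} {s : Set E}
    (h : ∀ k l, ContDiffOn ℝ (⊤ : ℕ∞) (fun p => A p k l) s) : ContDiffOn ℝ (⊤ : ℕ∞) A s := by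
  have : A = fun p => ∑ k : Fin m, ∑ l : Fin m,
      A p k l • Matrix.single k l (1 : ℝ) := by
    funext p
    simp only [Matrix.smul_single, smul_eq_mul, mul_one]
    exact Matrix.matrix_eq_sum_single (A p)
  rw [this]
  apply ContDiffOn.sum; intro k _
  apply ContDiffOn.sum; intro l _
  exact (h k l).smul contDiffOn_const

/-- If `A(x,y)` is a smooth invertible-matrix-valued function on `U × W` such that each
`(∂A/∂xⱼ)·A⁻¹` does not depend on `y ∈ W`, then locally `A(x,y) = G(x)·F(y)` with `G, F`
smooth and invertible-valued. -/
theorem smooth_matrix_splitting {m : ℕ}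
    (U W : Set (Fin 3 → ℝ)) (hUopen : IsOpen U) (hWopen : IsOpen W)
    (hUconv : Convex ℝ U) (hWconv : Convex ℝ W)
    (hU0 : (0 : Fin 3 → ℝ) ∈ U) (hW0 : (0 : Fin 3 → ℝ) ∈ W)
    (A : (Fin 3 → ℝ) × (Fin 3 → ℝ) → Matrix (Fin m) (Fin m) ℝ)
    (hA : ∀ k l : Fin m, ContDiffOn ℝ (⊤ : ℕ∞) (fun p => A p k l) (U ×ˢ W))
    (hAinv : ∀ p ∈ U ×ˢ W, IsUnit (A p))
    (hnoy : ∀ (j : Fin 3) (x y y' : Fin 3 → ℝ), x ∈ U → y ∈ W → y' ∈ W →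
      xLogDeriv A j (x, y) = xLogDeriv A j (x, y')) :
    ∃ U' : Set (Fin 3 → ℝ), IsOpen U' ∧ (0 : Fin 3 → ℝ) ∈ U' ∧ U' ⊆ U ∧
      ∃ (G : (Fin 3 → ℝ) → Matrix (Fin m) (Fin m) ℝ)
        (F : (Fin 3 → ℝ) → Matrix (Fin m) (Fin m) ℝ),
        (∀ k l : Fin m, ContDiffOn ℝ (⊤ : ℕ∞) (fun x => G x k l) U') ∧
        (∀ k l : Fin m, ContDiffOn ℝ (⊤ : ℕ∞) (fun y => F y k l) W) ∧
        (∀ x ∈ U', IsUnit (G x)) ∧ (∀ y ∈ W, IsUnit (F y)) ∧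
        (∀ x ∈ U', ∀ y ∈ W, A (x, y) = G x * F y) := by
  classical
  have hEopen : IsOpen (U ×ˢ W) := hUopen.prod hWopen
  have hAcd : ContDiffOn ℝ (⊤ : ℕ∞) A (U ×ˢ W) := contDiffOn_matrix hA
  have hdiff : ∀ p ∈ U ×ˢ W, DifferentiableAt ℝ A p := fun p hp =>
    (hAcd.contDiffAt (hEopen.mem_nhds hp)).differentiableAt (by simp)
  have hfd : ∀ x ∈ U, ∀ y ∈ W, ∀ j,
      xLogDeriv A j (x, y) =
        fderiv ℝ A (x, y) ((Pi.single j 1 : Fin 3 → ℝ), 0) * (A (x, y))⁻¹ := by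
    intro x hx y hy j
    unfold xLogDeriv
    congr 1
    ext k l
    rw [Matrix.of_apply, fderiv_entry (hdiff (x, y) ⟨hx, hy⟩) k l]
    rfl
  have key1 : ∀ j, ∀ x ∈ U, ∀ y ∈ W,
      fderiv ℝ A (x, y) ((Pi.single j 1 : Fin 3 → ℝ), 0)
        = xLogDeriv A j (x, 0) * A (x, y) := by
    intro j x hx y hy
    have hu : IsUnit (A (x, y)).det :=
      (Matrix.isUnit_iff_isUnit_det _).mp (hAinv _ ⟨hx, hy⟩)
    calc fderiv ℝ A (x, y) ((Pi.single j 1 : Fin 3 → ℝ), 0)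
        = (fderiv ℝ A (x, y) ((Pi.single j 1 : Fin 3 → ℝ), 0) * (A (x, y))⁻¹)
            * A (x, y) := by
          rw [mul_assoc, Matrix.nonsing_inv_mul _ hu, mul_one]
      _ = xLogDeriv A j (x, 0) * A (x, y) := by
          rw [← hfd x hx y hy j, hnoy j x y 0 hx hy hW0]
  have key2 : ∀ x ∈ U, ∀ y ∈ W, ∀ v : Fin 3 → ℝ,
      fderiv ℝ A (x, y) (v, 0)
        = (∑ j, v j • xLogDeriv A j (x, 0)) * A (x, y) := by
    intro x hx y hy v
    have hv1 : v = ∑ j, v j • (Pi.single j 1 : Fin 3 → ℝ) := by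
      funext i
      simp [Finset.sum_apply, Pi.single_apply, mul_ite]
    have hv : ((v, 0) : (Fin 3 → ℝ) × (Fin 3 → ℝ))
        = ∑ j, v j • (((Pi.single j 1 : Fin 3 → ℝ), (0 : Fin 3 → ℝ))) := by
      refine Prod.ext ?_ ?_
      · rw [Prod.fst_sum]; simpa using hv1
      · rw [Prod.snd_sum]; simp
    rw [hv, map_sum, Finset.sum_mul]
    refine Finset.sum_congr rfl fun j _ => ?_
    rw [map_smul, key1 j x hx y hy, smul_mul_assoc]
  have keyconst : ∀ y ∈ W, ∀ x ∈ U,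
      Ring.inverse (A (x, 0)) * A (x, y) = Ring.inverse (A (0, 0)) * A (0, y) := by
    intro y hy
    set h : (Fin 3 → ℝ) → Matrix (Fin m) (Fin m) ℝ :=
      fun x => Ring.inverse (A (x, 0)) * A (x, y) with hh
    have hderiv : ∀ x ∈ U, HasFDerivAt h (0 : (Fin 3 → ℝ) →L[ℝ] Matrix (Fin m) (Fin m) ℝ) x := by
      intro x hx
      obtain ⟨u, hu⟩ := hAinv (x, 0) ⟨hx, hW0⟩
      set ι : (Fin 3 → ℝ) →L[ℝ] (Fin 3 → ℝ) × (Fin 3 → ℝ) :=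
        (ContinuousLinearMap.id ℝ (Fin 3 → ℝ)).prod 0 with hι
      have hιd : HasFDerivAt (fun x : Fin 3 → ℝ => ((x, 0) : (Fin 3 → ℝ) × (Fin 3 → ℝ))) ι x :=
        (hasFDerivAt_id x).prodMk (hasFDerivAt_const 0 x)
      have hB : HasFDerivAt (fun x => A (x, (0 : Fin 3 → ℝ)))
          ((fderiv ℝ A (x, 0)).comp ι) x :=
        ((hdiff (x, 0) ⟨hx, hW0⟩).hasFDerivAt).comp x hιd
      have hιd' : HasFDerivAt (fun x : Fin 3 → ℝ => ((x, y) : (Fin 3 → ℝ) × (Fin 3 → ℝ))) ι x :=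
        (hasFDerivAt_id x).prodMk (hasFDerivAt_const y x)
      have hAy : HasFDerivAt (fun x => A (x, y))
          ((fderiv ℝ A (x, y)).comp ι) x :=
        ((hdiff (x, y) ⟨hx, hy⟩).hasFDerivAt).comp x hιd' 
      have hinv : HasFDerivAt (Ring.inverse : Matrix (Fin m) (Fin m) ℝ → _)
          (-ContinuousLinearMap.mulLeftRight ℝ _ ↑u⁻¹ ↑u⁻¹) (A (x, 0)) := by
        rw [← hu]; exact hasFDerivAt_ringInverse u
      have hBinv : HasFDerivAt (fun x => Ring.inverse (A (x, 0)))
          ((-ContinuousLinearMap.mulLeftRight ℝ _ ↑u⁻¹ ↑u⁻¹).comp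
            ((fderiv ℝ A (x, 0)).comp ι)) x := by exact HasFDerivAt.comp x hinv hB
      have hmul := hBinv.mul' hAy
      have hS : ∀ v : Fin 3 → ℝ, ι v = (v, 0) := fun v => rfl
      have hD : ((Ring.inverse (A (x, 0)) •
            ((fderiv ℝ A (x, y)).comp ι)) +
          (show (Fin 3 → ℝ) →L[ℝ] Matrix (Fin m) (Fin m) ℝ from
            MulOpposite.op (A (x, y)) • (-ContinuousLinearMap.mulLeftRight ℝ _ ↑u⁻¹ ↑u⁻¹).comp
            ((fderiv ℝ A (x, 0)).comp ι)))
          = 0 := by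
        refine ContinuousLinearMap.ext fun v => ?_
        have h1 : fderiv ℝ A (x, y) (ι v)
            = (∑ j, v j • xLogDeriv A j (x, 0)) * A (x, y) := by
          rw [hS]; exact key2 x hx y hy v
        have h2 : fderiv ℝ A (x, 0) (ι v)
            = (∑ j, v j • xLogDeriv A j (x, 0)) * A (x, 0) := by
          rw [hS]; exact key2 x hx 0 hW0 v
        set S := ∑ j, v j • xLogDeriv A j (x, 0) with hSdef
        show Ring.inverse (A (x, 0)) * fderiv ℝ A (x, y) (ι v) +
          -((↑u⁻¹ : Matrix (Fin m) (Fin m) ℝ) * fderiv ℝ A (x, 0) (ι v) * (↑u⁻¹ : Matrix (Fin m) (Fin m) ℝ)) * A (x, y) = 0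
        rw [h1, h2, ← hu, Ring.inverse_unit]
        have e1 : (↑u⁻¹ : Matrix (Fin m) (Fin m) ℝ) * (S * (↑u : Matrix (Fin m) (Fin m) ℝ))
            * (↑u⁻¹ : Matrix (Fin m) (Fin m) ℝ) = (↑u⁻¹ : Matrix (Fin m) (Fin m) ℝ) * S := by
          rw [← mul_assoc, Units.mul_inv_cancel_right]
        rw [e1, neg_mul, mul_assoc, add_neg_cancel]
      exact hD ▸ hmul
    intro x hx
    have hdiffOn : DifferentiableOn ℝ h U := fun z hz =>
      ((hderiv z hz).differentiableAt).differentiableWithinAt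
    have hzero : ∀ z ∈ U, fderivWithin ℝ h U z = 0 := fun z hz => by
      rw [fderivWithin_of_isOpen hUopen hz, (hderiv z hz).fderiv]
    exact hUconv.is_const_of_fderivWithin_eq_zero hdiffOn hzero hx hU0
  refine ⟨U, hUopen, hU0, subset_rfl,
    fun x => A (x, 0) * Ring.inverse (A (0, 0)), fun y => A (0, y),
    ?_, ?_, ?_, ?_, ?_⟩
  · intro k l
    have hrw : (fun x => (A (x, 0) * Ring.inverse (A (0, 0))) k l)
        = fun x => ∑ i, A (x, 0) k i * Ring.inverse (A (0, 0)) i l := by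
      funext x; rw [Matrix.mul_apply]
    rw [hrw]
    apply ContDiffOn.sum; intro i _
    exact ((hA k i).comp
      ((contDiff_id.prodMk contDiff_const).contDiffOn)
      (fun x hx => Set.mem_prod.mpr ⟨hx, hW0⟩)).mul contDiffOn_const
  · intro k l
    exact (hA k l).comp ((contDiff_const.prodMk contDiff_id).contDiffOn)
      (fun y hy => Set.mem_prod.mpr ⟨hU0, hy⟩)
  · intro x hx
    exact (hAinv (x, 0) ⟨hx, hW0⟩).mul
      (isUnit_ringInverse.mpr (hAinv (0, 0) ⟨hU0, hW0⟩))
  · intro y hy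
    exact hAinv (0, y) ⟨hU0, hy⟩
  · intro x hx y hy
    have h0 := keyconst y hy x hx
    have hu := hAinv (x, 0) ⟨hx, hW0⟩
    calc A (x, y) = (A (x, 0) * Ring.inverse (A (x, 0))) * A (x, y) := by
          rw [Ring.mul_inverse_cancel _ hu, one_mul]
      _ = A (x, 0) * (Ring.inverse (A (x, 0)) * A (x, y)) := by rw [mul_assoc]
      _ = A (x, 0) * (Ring.inverse (A (0, 0)) * A (0, y)) := by rw [h0]
      _ = (A (x, 0) * Ring.inverse (A (0, 0))) * A (0, y) := by rw [mul_assoc]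

end Aux
end

section
/- Let D ⊆ ℂ³ be a connected open set, let G : D → GL(3,ℂ) be holomorphic, let F : D → GL(3,ℂ) be antiholomorphic (i.e. the entrywise complex conjugate of F is holomorphic on D), and suppose that for every z ∈ D the matrix A(z) = G(z)·F(z) is Hermitian positive definite. Then there exists a holomorphic map H : D → GL(3,ℂ) such that A(z) = H(z)·H(z)^* for all z ∈ D, where H(z)^* is the conjugate transpose. -/
open scoped ComplexOrder

open Matrix

private lemma detDiffOn {D : Set (Fin 3 → ℂ)} {M : (Fin 3 → ℂ) → Matrix (Fin 3) (Fin 3) ℂ}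
    (h : ∀ k l, DifferentiableOn ℂ (fun z => M z k l) D) :
    DifferentiableOn ℂ (fun z => (M z).det) D := by
  simp only [Matrix.det_apply', Fin.prod_univ_three]
  apply DifferentiableOn.fun_sum
  intro σ _
  exact (((h (σ 0) 0).mul (h (σ 1) 1)).mul (h (σ 2) 2)).const_mul _

private lemma invDiffOn {D : Set (Fin 3 → ℂ)} {M : (Fin 3 → ℂ) → Matrix (Fin 3) (Fin 3) ℂ}
    (h : ∀ k l, DifferentiableOn ℂ (fun z => M z k l) D)
    (hunit : ∀ z ∈ D, IsUnit (M z)) (k l : Fin 3) :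
    DifferentiableOn ℂ (fun z => (M z)⁻¹ k l) D := by
  have hdet : ∀ z ∈ D, (M z).det ≠ 0 := fun z hz => by
    have := (Matrix.isUnit_iff_isUnit_det _).1 (hunit z hz)
    exact this.ne_zero
  have hadj : DifferentiableOn ℂ (fun z => (M z).adjugate k l) D := by
    simp only [Matrix.adjugate_apply]
    apply detDiffOn
    intro a b
    by_cases hab : a = l
    · simp only [hab, Matrix.updateRow_self]
      exact differentiableOn_const _
    · simp only [Matrix.updateRow_ne hab]
      exact h a b
  have : ∀ z, (M z)⁻¹ k l = ((M z).det)⁻¹ * (M z).adjugate k l := by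
    intro z
    rw [Matrix.inv_def, Matrix.smul_apply, Ring.inverse_eq_inv, smul_eq_mul]
  simp only [this]
  exact ((detDiffOn h).inv hdet).mul hadj

/-- A function that is holomorphic and antiholomorphic on an open preconnected set is constant. -/
private lemma const_of_holo_antiholo {D : Set (Fin 3 → ℂ)} (hD : IsOpen D)
    (hDc : IsPreconnected D) {f : (Fin 3 → ℂ) → ℂ}
    (hf : DifferentiableOn ℂ f D)
    (hcf : DifferentiableOn ℂ (fun z => (starRingEnd ℂ) (f z)) D) :
    ∀ x ∈ D, ∀ y ∈ D, f x = f y := by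
  have hzero : ∀ z ∈ D, fderiv ℂ f z = 0 := by
    intro z hz
    have hfz : DifferentiableAt ℂ f z := hf.differentiableAt (hD.mem_nhds hz)
    have hgz : DifferentiableAt ℂ (fun w => (starRingEnd ℂ) (f w)) z :=
      hcf.differentiableAt (hD.mem_nhds hz)
    set L := fderiv ℂ f z
    set M := fderiv ℂ (fun w => (starRingEnd ℂ) (f w)) z
    have h1 : HasFDerivAt f L z := hfz.hasFDerivAt
    have h2 : HasFDerivAt (fun w => (starRingEnd ℂ) (f w)) M z := hgz.hasFDerivAt
    have h3 : HasFDerivAt (fun w => (starRingEnd ℂ) (f w))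
        ((Complex.conjCLE.toContinuousLinearMap).comp (L.restrictScalars ℝ)) z :=
      (Complex.conjCLE.toContinuousLinearMap.hasFDerivAt).comp z (h1.restrictScalars ℝ)
    have heq : (M.restrictScalars ℝ : (Fin 3 → ℂ) →L[ℝ] ℂ) =
        (Complex.conjCLE.toContinuousLinearMap).comp (L.restrictScalars ℝ) :=
      (h2.restrictScalars ℝ).unique h3
    have hMv : ∀ v, M v = (starRingEnd ℂ) (L v) := by
      intro v
      have := congrArg (fun T => T v) heq
      simpa using this
    have hLv : ∀ v, L v = 0 := by
      intro v
      have e1 : M (Complex.I • v) = Complex.I * (starRingEnd ℂ) (L v) := by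
        rw [M.map_smul, smul_eq_mul, hMv v]
      have e2 : M (Complex.I • v) = -Complex.I * (starRingEnd ℂ) (L v) := by
        rw [hMv, L.map_smul, smul_eq_mul, _root_.map_mul, Complex.conj_I]
      have h4 := e1.symm.trans e2
      have h0 : (starRingEnd ℂ) (L v) = 0 := by
        have h5 : (2 * Complex.I) * (starRingEnd ℂ) (L v) = 0 := by linear_combination h4
        rcases mul_eq_zero.1 h5 with h | h
        · exact absurd h (by simp [Complex.I_ne_zero])
        · exact h
      simpa using congrArg (starRingEnd ℂ) h0
    exact ContinuousLinearMap.ext fun v => hLv v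
  have hloc : IsLocallyConstant (fun z : D => f z) := by
    rw [IsLocallyConstant.iff_exists_open]
    rintro ⟨z, hz⟩
    obtain ⟨ε, hε, hball⟩ := Metric.isOpen_iff.1 hD z hz
    refine ⟨Subtype.val ⁻¹' Metric.ball z ε,
      Metric.isOpen_ball.preimage continuous_subtype_val, by simpa using hε, ?_⟩
    rintro ⟨y, hy⟩ hmem
    exact (convex_ball z ε).is_const_of_fderivWithin_eq_zero (hf.mono hball)
      (fun x hx => by
        rw [fderivWithin_of_isOpen Metric.isOpen_ball hx]
        exact hzero x (hball hx))
      hmem (Metric.mem_ball_self hε)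
  intro x hx y hy
  haveI : PreconnectedSpace D := Subtype.preconnectedSpace hDc
  exact hloc.apply_eq_of_preconnectedSpace ⟨x, hx⟩ ⟨y, hy⟩

private lemma posdef_congr {M N : Matrix (Fin 3) (Fin 3) ℂ} (hM : M.PosDef)
    (hN : IsUnit N) : (N * M * Nᴴ).PosDef := by
  refine Matrix.PosDef.of_dotProduct_mulVec_pos ?_ ?_
  · show (N * M * Nᴴ)ᴴ = N * M * Nᴴ
    simp [Matrix.conjTranspose_mul, hM.isHermitian.eq, mul_assoc]
  · intro x hx
    have hx' : Nᴴ *ᵥ x ≠ 0 := by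
      intro h
      apply hx
      have hinj := Matrix.mulVec_injective_iff_isUnit.2 ((Matrix.isUnit_conjTranspose N).2 hN)
      have : Nᴴ *ᵥ x = Nᴴ *ᵥ 0 := by simpa [Matrix.mulVec_zero] using h
      exact hinj this
    have hpos := hM.dotProduct_mulVec_pos hx'
    have key : star x ⬝ᵥ (N * M * Nᴴ) *ᵥ x
        = star (Nᴴ *ᵥ x) ⬝ᵥ M *ᵥ (Nᴴ *ᵥ x) := by
      rw [Matrix.star_mulVec, Matrix.conjTranspose_conjTranspose,
        ← Matrix.dotProduct_mulVec, Matrix.mulVec_mulVec, Matrix.mulVec_mulVec, mul_assoc]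
    rw [key]
    exact hpos

/-- If `G` is holomorphic, `F` antiholomorphic on a connected open `D ⊆ ℂ³`, both
`GL(3,ℂ)`-valued, and `A = G·F` is Hermitian positive definite on `D`, then
`A = H·Hᴴ` for some holomorphic `GL(3,ℂ)`-valued `H`. -/
theorem hermitian_holomorphic_factorization
    (D : Set (Fin 3 → ℂ)) (hD : IsOpen D) (hDconn : IsConnected D)
    (G F : (Fin 3 → ℂ) → Matrix (Fin 3) (Fin 3) ℂ)
    (hG : ∀ k l : Fin 3, DifferentiableOn ℂ (fun z => G z k l) D)
    (hF : ∀ k l : Fin 3, DifferentiableOn ℂ (fun z => (starRingEnd ℂ) (F z k l)) D)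
    (hGinv : ∀ z ∈ D, IsUnit (G z))
    (hFinv : ∀ z ∈ D, IsUnit (F z))
    (hpos : ∀ z ∈ D, (G z * F z).PosDef) :
    ∃ H : (Fin 3 → ℂ) → Matrix (Fin 3) (Fin 3) ℂ,
      (∀ k l : Fin 3, DifferentiableOn ℂ (fun z => H z k l) D) ∧
      (∀ z ∈ D, IsUnit (H z)) ∧
      (∀ z ∈ D, G z * F z = H z * (H z).conjTranspose) := by
  obtain ⟨z₀, hz₀⟩ := hDconn.nonempty
  set Φ : (Fin 3 → ℂ) → Matrix (Fin 3) (Fin 3) ℂ := fun z => (G z)⁻¹ * (F z)ᴴ with hΦ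
  have hGdet : ∀ z ∈ D, IsUnit (G z).det := fun z hz =>
    (Matrix.isUnit_iff_isUnit_det _).1 (hGinv z hz)
  -- Φ entries are holomorphic
  have hΦdiff : ∀ k l, DifferentiableOn ℂ (fun z => Φ z k l) D := by
    intro k l
    have : ∀ z, Φ z k l = ∑ m, (G z)⁻¹ k m * (starRingEnd ℂ) (F z l m) := by
      intro z; simp [hΦ, Matrix.mul_apply, Matrix.conjTranspose_apply]
    simp only [this]
    exact DifferentiableOn.fun_sum fun m _ => (invDiffOn hG hGinv k m).mul (hF l m)
  -- hermitian identity
  have herm : ∀ z ∈ D, G z * F z = (F z)ᴴ * (G z)ᴴ := by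
    intro z hz
    have := (hpos z hz).isHermitian.eq
    rw [Matrix.conjTranspose_mul] at this
    exact this.symm
  -- Φ is hermitian on D
  have hΦherm : ∀ z ∈ D, (Φ z)ᴴ = Φ z := by
    intro z hz
    have hFz : F z = (G z)⁻¹ * ((F z)ᴴ * (G z)ᴴ) := by
      rw [← herm z hz, ← mul_assoc, Matrix.nonsing_inv_mul _ (hGdet z hz), one_mul]
    have : (Φ z)ᴴ = F z * ((G z)⁻¹)ᴴ := by
      simp [hΦ, Matrix.conjTranspose_mul]
    rw [this, hFz]
    have hGG : (G z)ᴴ * ((G z)⁻¹)ᴴ = 1 := by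
      rw [← Matrix.conjTranspose_mul, Matrix.nonsing_inv_mul _ (hGdet z hz),
        Matrix.conjTranspose_one]
    calc (G z)⁻¹ * ((F z)ᴴ * (G z)ᴴ) * ((G z)⁻¹)ᴴ
        = (G z)⁻¹ * (F z)ᴴ * ((G z)ᴴ * ((G z)⁻¹)ᴴ) := by
          simp only [mul_assoc]
      _ = Φ z := by rw [hGG, mul_one]
  -- Φ is constant
  have hΦconst : ∀ z ∈ D, Φ z = Φ z₀ := by
    intro z hz
    ext k l
    refine const_of_holo_antiholo hD hDconn.isPreconnected (hΦdiff k l) ?_ z hz z₀ hz₀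
    apply (hΦdiff l k).congr
    intro w hw
    conv_lhs => rw [← hΦherm w hw]
    simp [Matrix.conjTranspose_apply]
  set C := Φ z₀ with hC
  -- F z = Cᴴ * (G z)ᴴ on D
  have hFeq : ∀ z ∈ D, F z = Cᴴ * (G z)ᴴ := by
    intro z hz
    have h1 : (F z)ᴴ = G z * C := by
      rw [← hΦconst z hz, hΦ]
      rw [← mul_assoc, Matrix.mul_nonsing_inv _ (hGdet z hz), one_mul]
    calc F z = ((F z)ᴴ)ᴴ := by rw [Matrix.conjTranspose_conjTranspose]
      _ = Cᴴ * (G z)ᴴ := by rw [h1, Matrix.conjTranspose_mul]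
  have hAeq : ∀ z ∈ D, G z * F z = G z * Cᴴ * (G z)ᴴ := by
    intro z hz
    rw [hFeq z hz, mul_assoc]
  -- Cᴴ is positive definite
  have hCpos : (Cᴴ).PosDef := by
    have hGi : IsUnit (G z₀)⁻¹ := by
      rw [Matrix.isUnit_nonsing_inv_iff]
      exact hGinv z₀ hz₀
    have h1 : (G z₀)⁻¹ * (G z₀ * F z₀) * ((G z₀)⁻¹)ᴴ = Cᴴ := by
      rw [hAeq z₀ hz₀]
      calc (G z₀)⁻¹ * (G z₀ * Cᴴ * (G z₀)ᴴ) * ((G z₀)⁻¹)ᴴ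
          = ((G z₀)⁻¹ * G z₀) * (Cᴴ * ((G z₀)ᴴ * ((G z₀)⁻¹)ᴴ)) := by
            simp only [mul_assoc]
        _ = Cᴴ := by
            rw [Matrix.nonsing_inv_mul _ (hGdet z₀ hz₀), ← Matrix.conjTranspose_mul,
              Matrix.nonsing_inv_mul _ (hGdet z₀ hz₀), Matrix.conjTranspose_one,
              mul_one, one_mul]
    rw [← h1]
    exact posdef_congr (hpos z₀ hz₀) hGi
  open scoped MatrixOrder in set B := CFC.sqrt Cᴴ with hB
  open scoped MatrixOrder in have hBB : B * B = Cᴴ := CFC.sqrt_mul_sqrt_self _ hCpos.posSemidef.nonneg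
  open scoped MatrixOrder in have hBH : Bᴴ = B := (CFC.sqrt_nonneg Cᴴ).posSemidef.isHermitian.eq
  have hBunit : IsUnit B := by
    rw [Matrix.isUnit_iff_isUnit_det]
    have hdet : B.det * B.det = (Cᴴ).det := by rw [← Matrix.det_mul, hBB]
    have : (Cᴴ).det ≠ 0 := hCpos.det_pos.ne'
    refine IsUnit.mk0 _ fun h => this ?_
    rw [← hdet, h, zero_mul]
  refine ⟨fun z => G z * B, ?_, ?_, ?_⟩
  · intro k l
    have : ∀ z, (G z * B) k l = ∑ m, G z k m * B m l := fun z => Matrix.mul_apply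
    simp only [this]
    exact DifferentiableOn.fun_sum fun m _ => (hG k m).mul_const _
  · intro z hz
    exact (hGinv z hz).mul hBunit
  · intro z hz
    rw [Matrix.conjTranspose_mul, hBH, hAeq z hz, ← hBB]
    simp only [mul_assoc]
end

section
/- On ℝ⁶ with coordinates (x,y,z,p,q,h), let Ω = dx∧dp + dy∧dq + dz∧dh and, for a real constant γ, let ω_γ = dp∧dq∧dz + dx∧dy∧dh − γ·dx∧dy∧dz (the Monge–Ampère structure of the Chynoweth–Sewell equation f_xx f_yy − f_xy² + f_zz = γ). Then the linear map φ(x,y,z,p,q,h) = (x, y, h, p, q, γh − z) satisfies φ^*Ω = Ω (φ is a linear symplectomorphism) and φ^*ω_γ = dp∧dq∧dh − dx∧dy∧dz (the effective form of the classical Monge–Ampère equation hess(f) = 1); hence every Chynoweth–Sewell equation is symplectically equivalent to hess(f) = 1. -/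
open scoped TensorProduct

/-- The coordinate covectors `dx, dy, dz, dp, dq, dh` on `ℝ⁶` (indices `0,…,5`). -/
noncomputable def dcoord (i : Fin 6) : (Fin 6 → ℝ) →ₗ[ℝ] ℝ := LinearMap.proj i

/-- Wedge of three covectors on `ℝ⁶`. -/
noncomputable def w3 (a b c : (Fin 6 → ℝ) →ₗ[ℝ] ℝ) :
    AlternatingMap ℝ (Fin 6 → ℝ) ℝ (Fin 3) :=
  (wedge (oneForm a) (wedge (oneForm b) (oneForm c))).domDomCongr (finCongr rfl)

/-- Wedge of two covectors on `ℝ⁶`. -/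
noncomputable def w2 (a b : (Fin 6 → ℝ) →ₗ[ℝ] ℝ) :
    AlternatingMap ℝ (Fin 6 → ℝ) ℝ (Fin 2) :=
  (wedge (oneForm a) (oneForm b)).domDomCongr (finCongr rfl)

/-- The symplectic form `Ω = dx∧dp + dy∧dq + dz∧dh` on `ℝ⁶`. -/
noncomputable def ΩCS : AlternatingMap ℝ (Fin 6 → ℝ) ℝ (Fin 2) :=
  w2 (dcoord 0) (dcoord 3) + w2 (dcoord 1) (dcoord 4) + w2 (dcoord 2) (dcoord 5)

/-- The effective form `ω_γ = dp∧dq∧dz + dx∧dy∧dh − γ·dx∧dy∧dz` of the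
Chynoweth–Sewell equation. -/
noncomputable def ωCS (γ : ℝ) : AlternatingMap ℝ (Fin 6 → ℝ) ℝ (Fin 3) :=
  w3 (dcoord 3) (dcoord 4) (dcoord 2) + w3 (dcoord 0) (dcoord 1) (dcoord 5)
    - γ • w3 (dcoord 0) (dcoord 1) (dcoord 2)

/-- The linear map `φ(x,y,z,p,q,h) = (x, y, h, p, q, γh − z)`. -/
noncomputable def φCS (γ : ℝ) : (Fin 6 → ℝ) →ₗ[ℝ] (Fin 6 → ℝ) :=
  LinearMap.pi ![dcoord 0, dcoord 1, dcoord 5, dcoord 3, dcoord 4,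
    γ • dcoord 5 - dcoord 2]

/-! Pullback along a linear map commutes with `domCoprod`, hence with `wedge`, so `φ^*Ω` and
`φ^*ω_γ` are obtained by substituting the pulled-back covectors `φ^*dz = dh` and
`φ^*dh = γ dh − dz` (the other four are fixed). What remains is covector algebra:
`dh ∧ (γ dh − dz) = dz ∧ dh`, and in `φ^*ω_γ` the term `γ dx∧dy∧dh` coming from
`dx∧dy∧(γ dh − dz)` cancels `−γ dx∧dy∧dh`. -/

namespace AlternatingMap

section Pullback

variable {R M M₂ : Type*} [CommSemiring R] [AddCommMonoid M] [Module R M]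
  [AddCommMonoid M₂] [Module R M₂] {ι : Type*}

theorem smul_compLinearMap {N S : Type*} [AddCommMonoid N] [Module R N] [Monoid S]
    [DistribMulAction S N] [SMulCommClass R S N]
    (c : S) (f : M [⋀^ι]→ₗ[R] N) (g : M₂ →ₗ[R] M) :
    (c • f).compLinearMap g = c • f.compLinearMap g :=
  rfl

theorem sub_compLinearMap {N : Type*} [AddCommGroup N] [Module R N]
    (f₁ f₂ : M [⋀^ι]→ₗ[R] N) (g : M₂ →ₗ[R] M) :
    (f₁ - f₂).compLinearMap g = f₁.compLinearMap g - f₂.compLinearMap g :=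
  rfl

end Pullback

theorem domCoprod_compLinearMap {R M M₂ N₁ N₂ : Type*} [CommSemiring R]
    [AddCommGroup M] [Module R M] [AddCommGroup M₂] [Module R M₂]
    [AddCommGroup N₁] [Module R N₁] [AddCommGroup N₂] [Module R N₂]
    {ιa ιb : Type*} [Fintype ιa] [Fintype ιb] [DecidableEq ιa] [DecidableEq ιb]
    (a : M [⋀^ιa]→ₗ[R] N₁) (b : M [⋀^ιb]→ₗ[R] N₂) (g : M₂ →ₗ[R] M) :
    (a.domCoprod b).compLinearMap g = (a.compLinearMap g).domCoprod (b.compLinearMap g) := by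
  ext v
  simp only [compLinearMap_apply, domCoprod_apply, _root_.sum_apply]
  refine Finset.sum_congr rfl fun σ _ => ?_
  induction σ using Quotient.inductionOn'
  rfl

end AlternatingMap

section Wedge

variable {V A : Type*} [AddCommGroup V] [Module ℝ V] [CommRing A] [Algebra ℝ A]

theorem wedge_compLinearMap {W : Type*} [AddCommGroup W] [Module ℝ W] {k l : ℕ}
    (α : AlternatingMap ℝ V A (Fin k)) (β : AlternatingMap ℝ V A (Fin l)) (g : W →ₗ[ℝ] V) :
    (wedge α β).compLinearMap g = wedge (α.compLinearMap g) (β.compLinearMap g) := by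
  simp only [wedge, ← AlternatingMap.domCoprod_compLinearMap]
  rfl

theorem oneForm_compLinearMap {W : Type*} [AddCommGroup W] [Module ℝ W]
    (ξ : V →ₗ[ℝ] A) (g : W →ₗ[ℝ] V) :
    (oneForm ξ).compLinearMap g = oneForm (ξ ∘ₗ g) :=
  rfl

theorem oneForm_apply (ξ : V →ₗ[ℝ] A) (v : Fin 1 → V) : oneForm ξ v = ξ (v 0) :=
  rfl

theorem oneForm_domCoprod_eq_alternatization {l : ℕ} (a : V →ₗ[ℝ] A)
    (β : AlternatingMap ℝ V A (Fin l)) :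
    (oneForm a).domCoprod β =
      (l.factorial : ℝ)⁻¹ • MultilinearMap.alternatization
        (MultilinearMap.domCoprod (oneForm a : MultilinearMap ℝ (fun _ : Fin 1 => V) A) β) := by
  rw [MultilinearMap.domCoprod_alternization_eq, Fintype.card_fin, Fintype.card_fin,
    Nat.factorial_one, one_mul, ← Nat.cast_smul_eq_nsmul ℝ, smul_smul,
    inv_mul_cancel₀ (by positivity), one_smul]

theorem wedge_oneForm_oneForm_apply (a b : V →ₗ[ℝ] A) (v : Fin (1 + 1) → V) :
    wedge (oneForm a) (oneForm b) v = a (v 0) * b (v 1) - a (v 1) * b (v 0) := by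
  simp only [wedge, AlternatingMap.domDomCongr_apply, LinearMap.compAlternatingMap_apply]
  rw [oneForm_domCoprod_eq_alternatization, AlternatingMap.smul_apply,
    MultilinearMap.alternatization_apply]
  rw [show (Finset.univ : Finset (Equiv.Perm (Fin 1 ⊕ Fin 1))) =
    {1, Equiv.swap (Sum.inl 0) (Sum.inr 0)} from by decide]
  rw [Finset.sum_insert (by decide), Finset.sum_singleton]
  have hsum : ∀ x : Fin 1 ⊕ Fin 1, finSumFinEquiv x =
      (match x with | Sum.inl 0 => 0 | Sum.inr 0 => 1 : Fin 2) := by decide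
  simp only [Nat.factorial_one, Nat.cast_one, inv_one, Equiv.Perm.sign_one,
    MultilinearMap.domDomCongr_apply, Equiv.Perm.coe_one, id_eq, Function.comp_apply,
    MultilinearMap.domCoprod_apply, AlternatingMap.coe_multilinearMap, oneForm_apply, hsum,
    one_smul, Equiv.Perm.sign_swap', reduceCtorEq, ↓reduceIte, Equiv.swap_apply_def,
    Sum.inl.injEq, Sum.inr.injEq, Units.neg_smul, smul_add, smul_neg, map_add,
    LinearMap.mul'_apply, map_neg]
  ring

theorem wedge_oneForm_wedge_oneForm_oneForm_apply (a b c : V →ₗ[ℝ] A)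
    (v : Fin (1 + (1 + 1)) → V) :
    wedge (oneForm a) (wedge (oneForm b) (oneForm c)) v =
      a (v 0) * (b (v 1) * c (v 2) - b (v 2) * c (v 1))
      - a (v 1) * (b (v 0) * c (v 2) - b (v 2) * c (v 0))
      + a (v 2) * (b (v 0) * c (v 1) - b (v 1) * c (v 0)) := by
  generalize hβ : wedge (oneForm b) (oneForm c) = β
  simp only [wedge, AlternatingMap.domDomCongr_apply, LinearMap.compAlternatingMap_apply]
  rw [oneForm_domCoprod_eq_alternatization, AlternatingMap.smul_apply,
    MultilinearMap.alternatization_apply]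
  rw [show (Finset.univ : Finset (Equiv.Perm (Fin 1 ⊕ Fin (1 + 1)))) =
    {1, Equiv.swap (Sum.inl 0) (Sum.inr 0), Equiv.swap (Sum.inl 0) (Sum.inr 1),
      Equiv.swap (Sum.inr 0) (Sum.inr 1),
      Equiv.swap (Sum.inl 0) (Sum.inr 0) * Equiv.swap (Sum.inr 0) (Sum.inr 1),
      Equiv.swap (Sum.inr 0) (Sum.inr 1) * Equiv.swap (Sum.inl 0) (Sum.inr 0)} from by decide]
  rw [Finset.sum_insert (by decide), Finset.sum_insert (by decide),
    Finset.sum_insert (by decide), Finset.sum_insert (by decide),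
    Finset.sum_insert (by decide), Finset.sum_singleton]
  subst hβ
  have hsum : ∀ x : Fin 1 ⊕ Fin (1 + 1), finSumFinEquiv x =
      (match x with | Sum.inl 0 => 0 | Sum.inr 0 => 1 | Sum.inr 1 => 2 : Fin 3) := by decide
  simp only [Nat.reduceAdd, Nat.factorial_two, Nat.cast_ofNat, Equiv.Perm.sign_one,
    MultilinearMap.domDomCongr_apply, Equiv.Perm.coe_one, id_eq, Function.comp_apply, hsum,
    Fin.isValue, MultilinearMap.domCoprod_apply, AlternatingMap.coe_multilinearMap,
    oneForm_apply, wedge_oneForm_oneForm_apply, one_smul, Equiv.Perm.sign_swap', reduceCtorEq,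
    ↓reduceIte, Equiv.swap_apply_def, Sum.inl.injEq, Sum.inr.injEq, one_ne_zero,
    Units.neg_smul, zero_ne_one, Equiv.Perm.sign_mul, mul_neg, mul_one, neg_neg,
    Equiv.Perm.mul_apply, ite_eq_left_iff, imp_false, Decidable.not_not, not_false_eq_true,
    forall_const, smul_add, smul_neg, map_add, map_smul, LinearMap.mul'_apply, map_neg]
  -- `ring_nf` brings the cubic monomials to one normal form, so that `module` can collect
  -- the real coefficients `1/2` that multiply them.
  ring_nf
  module

end Wedge

theorem w2_apply (a b : (Fin 6 → ℝ) →ₗ[ℝ] ℝ) (v : Fin 2 → Fin 6 → ℝ) :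
    w2 a b v = a (v 0) * b (v 1) - a (v 1) * b (v 0) :=
  wedge_oneForm_oneForm_apply a b v

theorem w3_apply (a b c : (Fin 6 → ℝ) →ₗ[ℝ] ℝ) (v : Fin 3 → Fin 6 → ℝ) :
    w3 a b c v =
      a (v 0) * (b (v 1) * c (v 2) - b (v 2) * c (v 1))
      - a (v 1) * (b (v 0) * c (v 2) - b (v 2) * c (v 0))
      + a (v 2) * (b (v 0) * c (v 1) - b (v 1) * c (v 0)) :=
  wedge_oneForm_wedge_oneForm_oneForm_apply a b c v

section CovectorAlgebra

variable (a b c d : (Fin 6 → ℝ) →ₗ[ℝ] ℝ)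

theorem w2_compLinearMap (g : (Fin 6 → ℝ) →ₗ[ℝ] (Fin 6 → ℝ)) :
    (w2 a b).compLinearMap g = w2 (a ∘ₗ g) (b ∘ₗ g) := by
  simp only [w2, ← oneForm_compLinearMap, ← wedge_compLinearMap]
  rfl

theorem w3_compLinearMap (g : (Fin 6 → ℝ) →ₗ[ℝ] (Fin 6 → ℝ)) :
    (w3 a b c).compLinearMap g = w3 (a ∘ₗ g) (b ∘ₗ g) (c ∘ₗ g) := by
  simp only [w3, ← oneForm_compLinearMap, ← wedge_compLinearMap]
  rfl

theorem w2_self : w2 a a = 0 := by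
  ext v
  simp only [w2_apply, mul_comm, sub_self, AlternatingMap.zero_apply]

theorem w2_swap : w2 b a = -w2 a b := by
  ext v
  simp only [w2_apply, AlternatingMap.neg_apply]
  ring

theorem w2_sub_right : w2 a (b - c) = w2 a b - w2 a c := by
  ext v
  simp only [w2_apply, LinearMap.sub_apply, AlternatingMap.sub_apply]
  ring

theorem w2_smul_right (r : ℝ) : w2 a (r • b) = r • w2 a b := by
  ext v
  simp only [w2_apply, LinearMap.smul_apply, smul_eq_mul, AlternatingMap.smul_apply]
  ring

theorem w3_sub_right : w3 a b (c - d) = w3 a b c - w3 a b d := by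
  ext v
  simp only [w3_apply, LinearMap.sub_apply, AlternatingMap.sub_apply]
  ring

theorem w3_smul_right (r : ℝ) : w3 a b (r • c) = r • w3 a b c := by
  ext v
  simp only [w3_apply, LinearMap.smul_apply, smul_eq_mul, AlternatingMap.smul_apply]
  ring

end CovectorAlgebra

theorem dcoord_comp_φCS (γ : ℝ) (i : Fin 6) :
    dcoord i ∘ₗ φCS γ =
      ![dcoord 0, dcoord 1, dcoord 5, dcoord 3, dcoord 4, γ • dcoord 5 - dcoord 2] i :=
  LinearMap.proj_pi _ i

/-- The map `φ(x,y,z,p,q,h) = (x,y,h,p,q,γh−z)` is a linear symplectomorphism of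
`(ℝ⁶, Ω)` pulling the Chynoweth–Sewell form `ω_γ` back to the effective form
`dp∧dq∧dh − dx∧dy∧dz` of the classical Monge–Ampère equation `hess(f) = 1`. -/
theorem chynoweth_sewell_equiv_hess_one (γ : ℝ) :
    ΩCS.compLinearMap (φCS γ) = ΩCS ∧
    (ωCS γ).compLinearMap (φCS γ) =
      w3 (dcoord 3) (dcoord 4) (dcoord 5) - w3 (dcoord 0) (dcoord 1) (dcoord 2) := by
  simp only [ΩCS, ωCS, AlternatingMap.add_compLinearMap, AlternatingMap.sub_compLinearMap,
    AlternatingMap.smul_compLinearMap, w2_compLinearMap, w3_compLinearMap, dcoord_comp_φCS,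
    Fin.isValue, Matrix.cons_val_zero, Matrix.cons_val_one, Matrix.cons_val]
  constructor
  · rw [w2_sub_right, w2_smul_right, w2_self, smul_zero, zero_sub, ← w2_swap]
  · rw [w3_sub_right, w3_smul_right]
    abel
end
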